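/- arXiv:1909.13388 — 5 statements merged into one kernel-verified Lean document; each statement's English description precedes it below -/
import Mathlib

section
/- Let n ≥ 2 and 1 ≤ m < n. Then the number of ordered pairs (u, v) of n-cycles on [n] such that the product u∘v fixes every element of [m] equals ((n−1)!)² / (m! · binom(n−1, m)) = (n−1)! · (n−1−m)!; equivalently, m!·binom(n−1,m) times this number of pairs equals ((n−1)!)². In particular, the probability that the product of two independent uniformly random n-cycles fixes every element of [m] is 1/(m!·binom(n−1,m)). -/
open Equiv Finset

noncomputable section

/-- The number of cycles of a permutation of `Fin n`, counting fixed points as cycles. -/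
def cycleCount {n : ℕ} (σ : Equiv.Perm (Fin n)) : ℕ :=
  σ.cycleType.card + (Finset.univ.filter fun x => σ x = x).card

/-- A permutation of `Fin n` consisting of a single cycle of length `n`
(equivalently, having exactly one cycle, fixed points counting as cycles). -/
def IsFullCycle {n : ℕ} (σ : Equiv.Perm (Fin n)) : Prop :=
  cycleCount σ = 1

/-- `σ` separates the first `m` elements (`1, …, m`, i.e. indices `0, …, m-1`):
they lie in pairwise distinct cycles of `σ`. -/
def Separates {n : ℕ} (m : ℕ) (σ : Equiv.Perm (Fin n)) : Prop :=
  ∀ i j : Fin n, (i : ℕ) < m → (j : ℕ) < m → i ≠ j → ¬ σ.SameCycle i j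

/-- `C_m(N, k)`: the number of permutations of `[N]` with exactly `k` cycles
that separate the first `m` elements. -/
def sepCount (N m k : ℕ) : ℕ :=
  Nat.card {σ : Equiv.Perm (Fin N) // cycleCount σ = k ∧ Separates m σ}

/-- `C(N, k)`: the signless Stirling number of the first kind, i.e. the number of
permutations of `[N]` with exactly `k` cycles (fixed points counting as cycles). -/
def stirlingCycle (N k : ℕ) : ℕ :=
  Nat.card {σ : Equiv.Perm (Fin N) // cycleCount σ = k}

/-!
For fixed `u`, the condition on `v` is that it agrees with the full cycle `u⁻¹` on `S = [m]`.
Deleting a point `a ∈ S` from the cycles of a permutation is a bijection between the full cycles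
agreeing with `g` on `S` and the full cycles of the remaining `n - 1` points agreeing with the
contracted `g` on `S \ {a}`. After `|S|` deletions no constraint is left, and there are
`(n - |S| - 1)!` full cycles on `n - |S|` points; summing over the `(n - 1)!` choices of `u` gives
`(n - 1)! (n - 1 - m)!`.
-/

open Set
open scoped Nat

namespace Equiv.Perm

variable {α : Type*}

theorem isCycleOn_univ_iff {f : Perm α} : f.IsCycleOn univ ↔ ∀ x y, f.SameCycle x y := by
  simp [IsCycleOn, f.bijective.bijOn_univ]

theorem SameCycle.of_forall_sameCycle_apply {f g : Perm α} (h : ∀ z, f.SameCycle z (g z))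
    {x y : α} (hxy : g.SameCycle x y) : f.SameCycle x y := by
  obtain ⟨k, rfl⟩ := hxy
  induction k using Int.induction_on with
  | zero => rfl
  | succ k ih => rw [add_comm, zpow_add, zpow_one, mul_apply]; exact ih.trans (h _)
  | pred k ih =>
    rw [sub_eq_neg_add, zpow_add, zpow_neg_one, mul_apply]
    have := h (g⁻¹ ((g ^ (-(k : ℤ))) x))
    rw [coe_inv, apply_symm_apply] at this
    exact ih.trans this.symm

theorem isCycleOn_univ_iff_isCycle [Nontrivial α] {f : Perm α} :
    f.IsCycleOn univ ↔ f.IsCycle ∧ ∀ x, f x ≠ x := by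
  refine ⟨fun hf => ⟨?_, fun x => hf.apply_ne nontrivial_univ (mem_univ x)⟩, fun ⟨hc, hfix⟩ => ?_⟩
  · exact isCycle_iff_exists_isCycleOn.2 ⟨univ, nontrivial_univ, hf, fun x _ => mem_univ x⟩
  · simpa [hfix] using hc.isCycleOn

variable [DecidableEq α]

/-- The permutation of `{x // x ≠ a}` obtained by deleting `a` from the cycle of `v` through it. -/
def contract (a : α) (v : Perm α) : Perm {x // x ≠ a} :=
  (swap a (v a) * v).subtypePerm fun x => by simp [swap_apply_eq_iff]

theorem coe_contract_apply (a : α) (v : Perm α) (x : {x // x ≠ a}) :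
    (contract a v x : α) = swap a (v a) (v x) := rfl

theorem swap_mul_ofSubtype_contract (a : α) (v : Perm α) :
    swap a (v a) * ofSubtype (contract a v) = v := by
  rw [contract, ofSubtype_subtypePerm, swap_mul_self_mul]
  intro x hx hxa
  simp [hxa] at hx

theorem swap_mul_ofSubtype_apply_self (a b : α) (w : Perm {x // x ≠ a}) :
    (swap a b * ofSubtype w) a = b := by
  rw [mul_apply, ofSubtype_apply_of_not_mem w (by simp), swap_apply_left]

theorem contract_swap_mul_ofSubtype (a b : α) (w : Perm {x // x ≠ a}) :
    contract a (swap a b * ofSubtype w) = w := by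
  ext x
  rw [coe_contract_apply, swap_mul_ofSubtype_apply_self, ← mul_apply, swap_mul_self_mul,
    ofSubtype_apply_coe]

theorem sameCycle_swap_mul_apply (a z : α) (v : Perm α) :
    v.SameCycle z ((swap a (v a) * v) z) := by
  simp only [mul_apply, swap_apply_def, v.injective.eq_iff]
  split_ifs with hza hz
  · rw [← hza]
    exact sameCycle_apply_right.2 (sameCycle_apply_right.2 .rfl)
  · exact hz ▸ .rfl
  · exact sameCycle_apply_right.2 .rfl

theorem sameCycle_swap_mul_of_sameCycle [Finite α] {a y : α} {v : Perm α}
    (h : v.SameCycle (v a) y) (hy : y ≠ a) : (swap a (v a) * v).SameCycle (v a) y := by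
  obtain ⟨k, rfl⟩ := h.exists_nat_pow_eq
  -- invariant: each point of the `v`-orbit of `v a` is `a` or lies in its `swap a (v a) * v`-orbit
  refine Or.resolve_left ?_ hy
  clear h hy
  induction k with
  | zero => exact .inr .rfl
  | succ k ih =>
    rw [pow_succ', mul_apply]
    set z := (v ^ k) (v a)
    by_cases hz : z = a
    · exact .inr (hz ▸ .rfl)
    refine (eq_or_ne (v z) a).imp id fun hvz => (ih.resolve_left hz).trans ?_
    have hPz : (swap a (v a) * v) z = v z :=
      swap_apply_of_ne_of_ne hvz (v.injective.ne hz)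
    exact hPz ▸ sameCycle_apply_right.2 .rfl

theorem isCycleOn_univ_contract_iff [Finite α] {a : α} {v : Perm α} (hva : v a ≠ a) :
    (contract a v).IsCycleOn univ ↔ v.IsCycleOn univ := by
  simp only [isCycleOn_univ_iff, Subtype.forall, contract, sameCycle_subtypePerm]
  refine ⟨fun h => ?_, fun h x hx y hy => ?_⟩
  · have hva' : ∀ x, v.SameCycle x (v a) := by
      intro x
      obtain rfl | hx := eq_or_ne x a
      · exact sameCycle_apply_right.2 .rfl
      · exact (h x hx (v a) hva).of_forall_sameCycle_apply (sameCycle_swap_mul_apply a · v)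
    exact fun x y => (hva' x).trans (hva' y).symm
  · exact (sameCycle_swap_mul_of_sameCycle (h _ x) hx).symm.trans
      (sameCycle_swap_mul_of_sameCycle (h _ y) hy)

theorem eqOn_iff_contract {v g : Perm α} {S : Finset α} {a : α} (ha : a ∈ S) :
    EqOn v g S ↔ v a = g a ∧ EqOn (contract a v) (contract a g) (S.subtype (· ≠ a)) := by
  refine ⟨fun h => ⟨h ha, fun x hx => ?_⟩, fun ⟨hva, h⟩ x hx => ?_⟩
  · rw [Finset.mem_coe, Finset.mem_subtype] at hx
    exact Subtype.ext (by rw [coe_contract_apply, coe_contract_apply, h ha, h hx])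
  · obtain rfl | hxa := eq_or_ne x a
    · exact hva
    have := congrArg Subtype.val (@h ⟨x, hxa⟩ (by simpa using hx))
    rwa [coe_contract_apply, coe_contract_apply, hva, (swap a (g a)).injective.eq_iff] at this

variable [Fintype α]

theorem isCycleOn_univ_iff_cycleType [Nontrivial α] {v : Perm α} :
    v.IsCycleOn univ ↔ v.cycleType = {Fintype.card α} := by
  have hsupp : v.support = Finset.univ ↔ ∀ x, v x ≠ x := by
    simp [Finset.eq_univ_iff_forall]
  rw [isCycleOn_univ_iff_isCycle, ← card_cycleType_eq_one, ← hsupp]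
  refine ⟨fun ⟨h1, hs⟩ => ?_, fun h => ⟨by simp [h], Finset.eq_univ_of_card _ ?_⟩⟩
  · rw [(card_cycleType_eq_one.1 h1).cycleType, hs, Finset.card_univ]
  · rw [← sum_cycleType, h, Multiset.sum_singleton]

def contractEquiv {g : Perm α} {S : Finset α} {a : α} (ha : a ∈ S) (hga : g a ≠ a) :
    {v : Perm α // v.IsCycleOn univ ∧ EqOn v g S} ≃
      {w : Perm {x // x ≠ a} //
        w.IsCycleOn univ ∧ EqOn w (contract a g) (S.subtype (· ≠ a))} where
  toFun v :=
    ⟨contract a v, (isCycleOn_univ_contract_iff (v.2.2 ha ▸ hga)).2 v.2.1,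
      ((eqOn_iff_contract ha).1 v.2.2).2⟩
  invFun w :=
    ⟨swap a (g a) * ofSubtype w,
      (isCycleOn_univ_contract_iff (by rwa [swap_mul_ofSubtype_apply_self])).1
        (by rw [contract_swap_mul_ofSubtype]; exact w.2.1),
      (eqOn_iff_contract ha).2
        ⟨swap_mul_ofSubtype_apply_self .., by rw [contract_swap_mul_ofSubtype]; exact w.2.2⟩⟩
  left_inv v := Subtype.ext <| by
    simp only
    rw [← v.2.2 ha, swap_mul_ofSubtype_contract]
  right_inv w := Subtype.ext <| contract_swap_mul_ofSubtype ..

theorem card_isCycleOn_univ [Nonempty α] :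
    Nat.card {v : Perm α // v.IsCycleOn univ} = (Fintype.card α - 1)! := by
  rcases subsingleton_or_nontrivial α with hα | hα
  · rw [Nat.card_congr (Equiv.subtypeUnivEquiv fun v => isCycleOn_of_subsingleton v _),
      Nat.card_perm, Nat.card_eq_fintype_card,
      le_antisymm (Fintype.card_le_one_iff_subsingleton.2 hα) Fintype.card_pos]
    rfl
  · have h2 : 2 ≤ Fintype.card α := Fintype.one_lt_card_iff_nontrivial.2 hα
    rw [Nat.card_congr (Equiv.subtypeEquivRight fun _ => isCycleOn_univ_iff_cycleType),
      Nat.card_eq_fintype_card, Fintype.card_subtype, card_of_cycleType_singleton h2 le_rfl,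
      Nat.choose_self, mul_one]

theorem card_isCycleOn_univ_eqOn {g : Perm α} (hg : g.IsCycleOn univ) {S : Finset α}
    (hS : S ≠ Finset.univ) :
    Nat.card {v : Perm α // v.IsCycleOn univ ∧ EqOn v g S} = (Fintype.card α - #S - 1)! := by
  obtain ⟨c, hc⟩ : ∃ c, c ∉ S := by simpa [Finset.eq_univ_iff_forall] using hS
  clear hS
  induction hk : #S generalizing α with
  | zero =>
    rw [Finset.card_eq_zero] at hk
    subst hk
    have : Nonempty α := ⟨c⟩
    simp only [Finset.coe_empty, eqOn_empty, and_true, Nat.sub_zero]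
    exact card_isCycleOn_univ
  | succ k ih =>
    obtain ⟨a, ha⟩ : S.Nonempty := Finset.card_pos.1 (by omega)
    have hac : c ≠ a := ne_of_mem_of_not_mem ha hc |>.symm
    have : Nontrivial α := ⟨⟨c, a, hac⟩⟩
    have hga : g a ≠ a := hg.apply_ne nontrivial_univ (mem_univ a)
    have hcard : #(S.subtype (· ≠ a)) = k := by
      rw [Finset.card_subtype, Finset.filter_ne', Finset.card_erase_of_mem ha, hk,
        Nat.add_sub_cancel]
    rw [Nat.card_congr (contractEquiv ha hga),
      ih ((isCycleOn_univ_contract_iff hga).2 hg) (c := ⟨c, hac⟩) (by simpa using hc) hcard]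
    rw [show Fintype.card {x // x ≠ a} = Fintype.card α - 1 from Set.card_ne_eq a]
    congr 1
    omega

theorem card_pairs_isCycleOn_univ_mul_fixing {S : Finset α} (hS : S ≠ Finset.univ) :
    Nat.card {p : Perm α × Perm α //
        p.1.IsCycleOn univ ∧ p.2.IsCycleOn univ ∧ ∀ i ∈ S, (p.1 * p.2) i = i} =
      (Fintype.card α - 1)! * (Fintype.card α - #S - 1)! := by
  classical
  have : Nonempty α := by
    obtain ⟨c, -⟩ : ∃ c, c ∉ S := by simpa [Finset.eq_univ_iff_forall] using hS
    exact ⟨c⟩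
  let e : {p : Perm α × Perm α //
        p.1.IsCycleOn univ ∧ p.2.IsCycleOn univ ∧ ∀ i ∈ S, (p.1 * p.2) i = i} ≃
      Σ u : {u : Perm α // u.IsCycleOn univ},
        {v : Perm α // v.IsCycleOn univ ∧ EqOn v ⇑(u : Perm α)⁻¹ S} :=
    { toFun p := ⟨⟨p.1.1, p.2.1⟩, p.1.2, p.2.2.1, fun i hi => eq_inv_iff_eq.2 (p.2.2.2 i hi)⟩
      invFun q := ⟨(q.1.1, q.2.1), q.1.2, q.2.2.1, fun i hi =>
        (eq_inv_iff_eq.1 (q.2.2.2 hi) : q.1.1 (q.2.1 i) = i)⟩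
      left_inv _ := rfl
      right_inv _ := rfl }
  have hfiber (u : {u : Perm α // u.IsCycleOn univ}) :
      Nat.card {v : Perm α // v.IsCycleOn univ ∧ EqOn v ⇑(u : Perm α)⁻¹ S} =
        (Fintype.card α - #S - 1)! :=
    card_isCycleOn_univ_eqOn (isCycleOn_inv.2 u.2) hS
  rw [Nat.card_congr e, Nat.card_sigma]
  simp only [hfiber]
  rw [Finset.sum_const, Finset.card_univ, ← Nat.card_eq_fintype_card, card_isCycleOn_univ,
    smul_eq_mul]

end Equiv.Perm

open Equiv.Perm in
theorem isFullCycle_iff_isCycleOn_univ {n : ℕ} (hn : n ≠ 0) (σ : Perm (Fin n)) :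
    IsFullCycle σ ↔ σ.IsCycleOn univ := by
  rcases subsingleton_or_nontrivial (Fin n) with h | h
  · obtain rfl : n = 1 := by
      have := Fintype.card_le_one_iff_subsingleton.2 h
      rw [Fintype.card_fin] at this
      omega
    simp [IsFullCycle, cycleCount, Subsingleton.elim σ 1, isCycleOn_of_subsingleton]
  · have hfix : #(filter (fun x => σ x = x) univ) = 0 ↔ ∀ x, σ x ≠ x := by
      simp [Finset.filter_eq_empty_iff]
    rw [isCycleOn_univ_iff_isCycle, ← card_cycleType_eq_one, IsFullCycle, cycleCount, ← hfix]
    by_cases h1 : σ = 1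
    · have := Fin.nontrivial_iff_two_le.1 h
      simp only [h1, cycleType_one, Multiset.card_zero, Perm.coe_one, id_eq, filter_true,
        card_univ, Fintype.card_fin, zero_add, zero_ne_one, false_and, iff_false]
      omega
    · have := card_cycleType_pos.2 h1
      omega

theorem isolation_probability_general (n m : ℕ) (hm : m < n) :
    Nat.card {p : Equiv.Perm (Fin n) × Equiv.Perm (Fin n) //
        IsFullCycle p.1 ∧ IsFullCycle p.2 ∧ ∀ i : Fin n, (i : ℕ) < m → (p.1 * p.2) i = i} =
      Nat.factorial (n - 1) * Nat.factorial (n - 1 - m) ∧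
    Nat.factorial m * Nat.choose (n - 1) m *
      Nat.card {p : Equiv.Perm (Fin n) × Equiv.Perm (Fin n) //
        IsFullCycle p.1 ∧ IsFullCycle p.2 ∧ ∀ i : Fin n, (i : ℕ) < m → (p.1 * p.2) i = i} =
      Nat.factorial (n - 1) ^ 2 := by
  have hS : Finset.Iio (⟨m, hm⟩ : Fin n) ≠ Finset.univ := fun h => by
    simpa using Finset.ext_iff.1 h ⟨m, hm⟩
  have hcount : Nat.card {p : Equiv.Perm (Fin n) × Equiv.Perm (Fin n) //
      IsFullCycle p.1 ∧ IsFullCycle p.2 ∧ ∀ i : Fin n, (i : ℕ) < m → (p.1 * p.2) i = i} =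
      (n - 1)! * (n - 1 - m)! := by
    convert Equiv.Perm.card_pairs_isCycleOn_univ_mul_fixing hS using 1
    · refine Nat.card_congr (Equiv.subtypeEquivRight fun p => ?_)
      simp [isFullCycle_iff_isCycleOn_univ (by omega : n ≠ 0), Fin.lt_def]
    · rw [Fintype.card_fin, Fin.card_Iio, Nat.sub_right_comm]
  refine ⟨hcount, ?_⟩
  rw [hcount, sq]
  nth_rewrite 2 [← Nat.choose_mul_factorial_mul_factorial (by omega : m ≤ n - 1)]
  ring

/-- For `n ≥ 2` and `1 ≤ m < n`, the number of ordered pairs `(u, v)` of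
`n`-cycles on `[n]` whose product `u ∘ v` fixes every element of `[m]` equals
`((n-1)!)² / (m! ⬝ binom(n-1, m)) = (n-1)! ⬝ (n-1-m)!`; equivalently,
`m! ⬝ binom(n-1, m)` times this number equals `((n-1)!)²`. -/
theorem isolation_probability (n m : ℕ) (hn : 2 ≤ n) (hm1 : 1 ≤ m) (hm : m < n) :
    Nat.card {p : Equiv.Perm (Fin n) × Equiv.Perm (Fin n) //
        IsFullCycle p.1 ∧ IsFullCycle p.2 ∧ ∀ i : Fin n, (i : ℕ) < m → (p.1 * p.2) i = i} =
      Nat.factorial (n - 1) * Nat.factorial (n - 1 - m) ∧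
    Nat.factorial m * Nat.choose (n - 1) m *
      Nat.card {p : Equiv.Perm (Fin n) × Equiv.Perm (Fin n) //
        IsFullCycle p.1 ∧ IsFullCycle p.2 ∧ ∀ i : Fin n, (i : ℕ) < m → (p.1 * p.2) i = i} =
      Nat.factorial (n - 1) ^ 2 :=
  isolation_probability_general n m hm
end
end

section
/- Let n ≥ 2 and 1 ≤ m ≤ n, and let α be the composition (1, 1, …, 1, n+1−m) of n consisting of m−1 parts equal to 1 followed by one part equal to n+1−m. Then the number of ordered pairs (u, v) of n-cycles on [n] such that the product u∘v is α-separated equals (n−1)!·(n−m)!. -/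
open Equiv Finset

noncomputable section

/-- A permutation `σ` of `Fin n` is `α`-separated for a composition `α` with `k` parts
`α 0, …, α (k-1)`: every cycle of `σ` has all of its elements contained in a single
block `B_i`, where block `B_i` (for `i < k`) consists of the elements with (0-indexed)
values in `[α 0 + ⋯ + α (i-1), α 0 + ⋯ + α i)`. -/
def AlphaSeparated {n : ℕ} (k : ℕ) (α : ℕ → ℕ) (σ : Equiv.Perm (Fin n)) : Prop :=
  ∀ x y : Fin n, σ.SameCycle x y →
    ∃ i < k, (∑ j ∈ Finset.range i, α j) ≤ (x : ℕ) ∧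
      (x : ℕ) < ∑ j ∈ Finset.range (i + 1), α j ∧
      (∑ j ∈ Finset.range i, α j) ≤ (y : ℕ) ∧
      (y : ℕ) < ∑ j ∈ Finset.range (i + 1), α j

/-!
Cutting a point `a` out of a cycle, `v ↦ swap a (v a) * v`, is a bijection from the cycles on
`s` sending `a` to a prescribed `b` onto the cycles on `s \ {a}`. Hence the full cycles on `N`
points that agree with a given full cycle on a set `A` of `k` points number `(N - 1 - k)!`, by
induction on `A` (for `A = ∅` by summing over the value at a point). A pair `(u, v)` of
`n`-cycles has an `α`-separated product exactly when `v` agrees with `u⁻¹` on the first `m - 1`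
points, whence `(n - 1)! (n - m)!` pairs.
-/

open scoped Nat

namespace Equiv.Perm

variable {α : Type*}

theorem SameCycle.rel_of_forall_rel_apply {f : Perm α} {r : α → α → Prop}
    (hr : Equivalence r) (h : ∀ z, r z (f z)) {x y : α} (hxy : f.SameCycle x y) : r x y := by
  obtain ⟨k, rfl⟩ := hxy
  induction k using Int.induction_on with
  | zero => exact hr.refl x
  | succ k ih => rw [add_comm, zpow_one_add, mul_apply]; exact hr.trans ih (h _)
  | pred k ih =>
    have hinv := h ((f ^ (-(k : ℤ) - 1)) x)
    rw [← mul_apply, ← zpow_one_add, add_sub_cancel] at hinv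
    exact hr.trans ih (hr.symm hinv)

variable [DecidableEq α]

theorem sameCycle_swap_mul_iff {v : Perm α} {a x y : α} (hx : x ≠ a) (hy : y ≠ a) :
    (swap a (v a) * v).SameCycle x y ↔ v.SameCycle x y := by
  set w := swap a (v a) * v
  constructor
  · refine SameCycle.rel_of_forall_rel_apply (SameCycle.equivalence v) fun z => ?_
    by_cases hz : z = a
    · subst hz; exact ⟨0, by simp [w]⟩
    by_cases hvz : v z = a
    · exact ⟨2, by simp [w, hvz, pow_two]⟩
    · exact ⟨1, by simp [w, swap_apply_of_ne_of_ne hvz (v.injective.ne hz)]⟩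
  · -- `skip` moves `a` on to `v a`, so that every step of `v` becomes at most one step of `w`.
    let skip z := if z = a then v a else z
    have hr : Equivalence fun x y => w.SameCycle (skip x) (skip y) :=
      ⟨fun _ => .refl _ _, .symm, .trans⟩
    have hstep (z : α) : w.SameCycle (skip z) (skip (v z)) := by
      by_cases hz : z = a
      · subst hz; by_cases h : v z = z <;> simp [skip, h, SameCycle.refl]
      by_cases hvz : v z = a
      · simpa [skip, hz, hvz, w] using (SameCycle.refl w z).apply_right
      · simpa [skip, hz, hvz, w, swap_apply_of_ne_of_ne hvz (v.injective.ne hz)] using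
          (SameCycle.refl w z).apply_right
    intro hxy
    simpa [skip, hx, hy] using SameCycle.rel_of_forall_rel_apply hr hstep hxy

variable [Fintype α]

open Classical in
def cyclesOn (s : Finset α) : Finset (Perm α) := {v | v.IsCycleOn s ∧ ∀ x ∉ s, v x = x}

theorem IsCycleOn.of_mem_cyclesOn {s : Finset α} {v : Perm α} (hv : v ∈ cyclesOn s) :
    v.IsCycleOn s := by
  classical exact (mem_filter.mp hv).2.1

theorem mem_cyclesOn {s : Finset α} {v : Perm α} :
    v ∈ cyclesOn s ↔ (∀ x ∈ s, ∀ y ∈ s, v.SameCycle x y) ∧ ∀ x ∉ s, v x = x := by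
  simp only [cyclesOn, mem_filter, mem_univ, true_and, IsCycleOn, mem_coe]
  constructor
  · exact fun ⟨⟨_, hcyc⟩, hfix⟩ => ⟨fun x hx y hy => hcyc hx hy, hfix⟩
  rintro ⟨hcyc, hfix⟩
  refine ⟨⟨v.bijOn fun x => ?_, fun x hx y hy => hcyc hx hy⟩, hfix⟩
  by_cases hx : x ∈ s
  · refine iff_of_true ?_ hx
    by_contra hvx
    rw [v.injective (hfix _ hvx)] at hvx
    exact hvx hx
  · rw [hfix x hx]

theorem cyclesOn_of_subsingleton {s : Finset α} (hs : (s : Set α).Subsingleton) :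
    cyclesOn s = {1} := by
  ext v
  rw [mem_singleton]
  refine ⟨fun hv => ext fun x => ?_, fun hv => ?_⟩
  · by_cases hx : x ∈ s
    · exact hs ((IsCycleOn.of_mem_cyclesOn hv).1.mapsTo hx) hx
    · exact (mem_cyclesOn.mp hv).2 x hx
  · subst hv
    exact mem_cyclesOn.mpr ⟨fun x hx y hy => by rw [hs hx hy], fun _ _ => rfl⟩

theorem swap_apply_mul_mem_cyclesOn_erase_iff {s : Finset α} {a : α} {v : Perm α}
    (ha : a ∈ s) (hva : v a ∈ s) (hne : v a ≠ a) :
    swap a (v a) * v ∈ cyclesOn (s.erase a) ↔ v ∈ cyclesOn s := by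
  rw [mem_cyclesOn, mem_cyclesOn]
  constructor
  · rintro ⟨hcyc, hfix⟩
    have hfix' (x : α) (hx : x ∉ s) : v x = x := by
      have hxa : x ≠ a := by rintro rfl; exact hx ha
      have := hfix x (by simp [hx])
      rwa [mul_apply, swap_apply_eq_iff,
        swap_apply_of_ne_of_ne hxa (by rintro rfl; exact hx hva)] at this
    have hconn (z : α) (hz : z ∈ s) : v.SameCycle (v a) z := by
      by_cases hza : z = a
      · subst hza; exact sameCycle_apply_left.mpr (SameCycle.refl _ _)
      · exact (sameCycle_swap_mul_iff hne hza).mp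
          (hcyc _ (mem_erase.mpr ⟨hne, hva⟩) _ (mem_erase.mpr ⟨hza, hz⟩))
    exact ⟨fun x hx y hy => (hconn x hx).symm.trans (hconn y hy), hfix'⟩
  · rintro ⟨hcyc, hfix⟩
    refine ⟨fun x hx y hy => (sameCycle_swap_mul_iff (ne_of_mem_erase hx)
      (ne_of_mem_erase hy)).mpr (hcyc x (mem_of_mem_erase hx) y (mem_of_mem_erase hy)),
      fun x hx => ?_⟩
    by_cases hxa : x = a
    · subst hxa; simp
    · have hxs : x ∉ s := by simpa [hxa] using hx
      rw [mul_apply, hfix x hxs, swap_apply_of_ne_of_ne hxa (by rintro rfl; exact hxs hva)]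

theorem card_filter_cyclesOn_apply_eq_and (P : Perm α → Prop) [DecidablePred P]
    {s : Finset α} {a b : α} (ha : a ∈ s) (hb : b ∈ s) (hba : b ≠ a) :
    #{v ∈ cyclesOn s | v a = b ∧ P v} = #{w ∈ cyclesOn (s.erase a) | P (swap a b * w)} := by
  refine card_equiv (Equiv.mulLeft (swap a b)) fun v => ?_
  simp only [mem_filter, coe_mulLeft, swap_mul_self_mul]
  constructor
  · rintro ⟨hv, rfl, hP⟩
    exact ⟨(swap_apply_mul_mem_cyclesOn_erase_iff ha hb hba).mpr hv, hP⟩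
  · rintro ⟨hw, hP⟩
    have hva : v a = b := by
      have := (mem_cyclesOn.mp hw).2 a (by simp)
      rwa [mul_apply, swap_apply_eq_iff, swap_apply_left] at this
    subst hva
    exact ⟨(swap_apply_mul_mem_cyclesOn_erase_iff ha hb hba).mp hw, rfl, hP⟩

theorem card_cyclesOn (s : Finset α) : #(cyclesOn s) = (#s - 1)! := by
  induction s using Finset.strongInduction with
  | H s ih =>
  obtain hs | hs := (s : Set α).subsingleton_or_nontrivial
  · rw [cyclesOn_of_subsingleton hs, card_singleton,
      Nat.sub_eq_zero_of_le (card_le_one.mpr fun x hx y hy => hs hx hy)]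
    rfl
  have hs2 : 1 < #s := one_lt_card_iff_nontrivial.mpr hs
  obtain ⟨a, ha⟩ := hs.nonempty
  have hmaps : Set.MapsTo (fun v : Perm α => v a) (cyclesOn s) (s.erase a) := fun v hv => by
    have hv := IsCycleOn.of_mem_cyclesOn hv
    exact mem_erase.mpr ⟨hv.apply_ne hs ha, hv.apply_mem_iff.mpr ha⟩
  have hfiber (b : α) (hb : b ∈ s.erase a) : #{v ∈ cyclesOn s | v a = b} = (#s - 1 - 1)! := by
    have h := card_filter_cyclesOn_apply_eq_and (fun _ => True) ha (mem_of_mem_erase hb)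
      (ne_of_mem_erase hb)
    simp only [and_true, filter_true] at h
    rw [h, ih _ (erase_ssubset ha), card_erase_of_mem ha]
  rw [card_eq_sum_card_fiberwise hmaps, sum_congr rfl hfiber, sum_const, card_erase_of_mem ha,
    smul_eq_mul, Nat.mul_factorial_pred (by omega)]

theorem card_filter_cyclesOn_eqOn {σ : Perm α} {s A : Finset α} (hσ : σ ∈ cyclesOn s)
    (hA : A ⊆ s) : #{v ∈ cyclesOn s | ∀ x ∈ A, v x = σ x} = (#s - 1 - #A)! := by
  induction A using Finset.induction_on generalizing s σ with
  | empty => simp [card_cyclesOn]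
  | insert a A ha ih =>
    obtain hs | hs := (s : Set α).subsingleton_or_nontrivial
    · rw [cyclesOn_of_subsingleton hs, mem_singleton] at hσ
      subst hσ
      have : #s ≤ 1 := card_le_one.mpr fun x hx y hy => hs hx hy
      rw [cyclesOn_of_subsingleton hs, Nat.sub_eq_zero_of_le (by omega)]
      simp [filter_singleton]
    have has : a ∈ s := hA (mem_insert_self a A)
    have hσs := IsCycleOn.of_mem_cyclesOn hσ
    have hσa : σ a ∈ s.erase a :=
      mem_erase.mpr ⟨hσs.apply_ne hs has, hσs.apply_mem_iff.mpr has⟩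
    have hσ' : swap a (σ a) * σ ∈ cyclesOn (s.erase a) :=
      (swap_apply_mul_mem_cyclesOn_erase_iff has (mem_of_mem_erase hσa)
        (ne_of_mem_erase hσa)).mpr hσ
    have h := card_filter_cyclesOn_apply_eq_and (fun v => ∀ x ∈ A, v x = σ x) has
      (mem_of_mem_erase hσa) (ne_of_mem_erase hσa)
    have hpred (w : Perm α) : (∀ x ∈ A, (swap a (σ a) * w) x = σ x) ↔
        ∀ x ∈ A, w x = (swap a (σ a) * σ) x := by
      simp only [mul_apply, swap_apply_eq_iff]
    simp only [forall_mem_insert]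
    rw [h, filter_congr fun w _ => hpred w,
      ih hσ' (subset_erase.mpr ⟨(subset_insert a A).trans hA, ha⟩), card_erase_of_mem has,
      card_insert_of_notMem ha, Nat.sub_sub, Nat.sub_sub, Nat.sub_sub, add_comm #A]

theorem inv_mem_cyclesOn {s : Finset α} {v : Perm α} (hv : v ∈ cyclesOn s) :
    v⁻¹ ∈ cyclesOn s := by
  obtain ⟨hcyc, hfix⟩ := mem_cyclesOn.mp hv
  exact mem_cyclesOn.mpr ⟨fun x hx y hy => sameCycle_inv.mpr (hcyc x hx y hy),
    fun x hx => inv_eq_iff_eq.mpr (hfix x hx).symm⟩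

theorem card_pairs_cyclesOn_univ_mul_apply_eq_self (A : Finset α) :
    Nat.card {p : Perm α × Perm α //
        p.1 ∈ cyclesOn univ ∧ p.2 ∈ cyclesOn univ ∧ ∀ x ∈ A, (p.1 * p.2) x = x} =
      (Fintype.card α - 1)! * (Fintype.card α - 1 - #A)! := by
  let fiber (u : Perm α) : Finset (Perm α) := {v ∈ cyclesOn univ | ∀ x ∈ A, v x = u⁻¹ x}
  let e : {p : Perm α × Perm α //
        p.1 ∈ cyclesOn univ ∧ p.2 ∈ cyclesOn univ ∧ ∀ x ∈ A, (p.1 * p.2) x = x} ≃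
      Σ u : cyclesOn (univ : Finset α), fiber u :=
    { toFun p := ⟨⟨p.1.1, p.2.1⟩, p.1.2,
        mem_filter.mpr ⟨p.2.2.1, fun x hx => eq_inv_iff_eq.mpr (p.2.2.2 x hx)⟩⟩
      invFun q := ⟨(q.1, q.2), q.1.2, (mem_filter.mp q.2.2).1,
        fun x hx => by simp [(mem_filter.mp q.2.2).2 x hx]⟩
      left_inv _ := rfl
      right_inv _ := rfl }
  rw [Nat.card_congr e, Nat.card_sigma]
  simp only [Nat.card_eq_finsetCard, fiber]
  rw [sum_congr rfl fun u _ => card_filter_cyclesOn_eqOn (inv_mem_cyclesOn u.2) (subset_univ A),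
    sum_const, card_univ, Fintype.card_coe, card_cyclesOn, card_univ, smul_eq_mul]

end Equiv.Perm

open Equiv.Perm

theorem isFullCycle_iff_mem_cyclesOn_univ {n : ℕ} (hn : n ≠ 0) {σ : Perm (Fin n)} :
    IsFullCycle σ ↔ σ ∈ cyclesOn univ := by
  simp only [IsFullCycle, cycleCount, mem_cyclesOn, mem_univ, forall_const, not_true_eq_false,
    IsEmpty.forall_iff, implies_true, and_true]
  obtain hsub | hnt := subsingleton_or_nontrivial (Fin n)
  · obtain rfl : n = 1 := by have := Fin.subsingleton_iff_le_one.mp hsub; omega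
    simp [Subsingleton.elim σ 1]
  have hn2 : 2 ≤ n := Fin.nontrivial_iff_two_le.mp hnt
  constructor
  · intro h
    obtain h0 | h1 : σ.cycleType.card = 0 ∨ σ.cycleType.card = 1 := by omega
    · obtain rfl : σ = 1 := cycleType_eq_zero.mp (Multiset.card_eq_zero.mp h0)
      simp only [coe_one, id_eq, filter_true, card_univ, Fintype.card_fin, h0, zero_add] at h
      omega
    · have hσ : σ.IsCycle := card_cycleType_eq_one.mp h1
      have hfix : ∀ x, σ x ≠ x := by simpa [h1] using h
      exact fun x y => hσ.sameCycle (hfix x) (hfix y)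
  · intro hcyc
    have hnofix (x : Fin n) : σ x ≠ x := fun hx => by
      obtain ⟨y, hy⟩ := exists_ne x
      exact hy ((hcyc x y).eq_of_left hx).symm
    have hσ : σ.IsCycle := ⟨⟨0, by omega⟩, hnofix _, fun y _ => hcyc _ y⟩
    rw [card_cycleType_eq_one.mpr hσ,
      card_eq_zero.mpr (filter_eq_empty_iff.mpr fun x _ => hnofix x)]

theorem alphaSeparated_iff_forall_lt_apply_eq_self {n m : ℕ} (hm : 1 ≤ m) {σ : Perm (Fin n)} :
    AlphaSeparated m (fun i => if i < m - 1 then 1 else n + 1 - m) σ ↔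
      ∀ x ∈ ({x | (x : ℕ) < m - 1} : Finset (Fin n)), σ x = x := by
  set α : ℕ → ℕ := fun i => if i < m - 1 then 1 else n + 1 - m
  have hsum (i : ℕ) (hi : i ≤ m - 1) : ∑ j ∈ range i, α j = i := by
    induction i with
    | zero => rfl
    | succ i ih =>
      rw [sum_range_succ, ih (by omega)]
      simp only [α, if_pos (show i < m - 1 by omega)]
  have hlast : n ≤ ∑ j ∈ range (m - 1 + 1), α j := by
    simp only [sum_range_succ, hsum _ le_rfl, α, lt_irrefl, if_false]
    omega
  simp only [mem_filter, mem_univ, true_and]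
  constructor
  · intro hsep x hx
    obtain ⟨i, him, h1, h2, h3, h4⟩ := hsep x (σ x) (SameCycle.refl _ _).apply_right
    obtain hi | rfl : i < m - 1 ∨ i = m - 1 := by omega
    · rw [hsum i hi.le] at h1 h3
      rw [hsum (i + 1) hi] at h2 h4
      exact Fin.ext (by omega)
    · rw [hsum _ le_rfl] at h1
      omega
  · intro hfix x y hxy
    by_cases hx : (x : ℕ) < m - 1
    · obtain rfl : x = y := hxy.eq_of_left (hfix x hx)
      refine ⟨x, by omega, ?_, ?_, ?_, ?_⟩ <;> simp only [hsum _ hx.le, hsum _ hx] <;> omega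
    · have hy : ¬ (y : ℕ) < m - 1 := fun hy => hx (hxy.symm.eq_of_left (hfix y hy) ▸ hy)
      exact ⟨m - 1, by omega, by rw [hsum _ le_rfl]; omega, x.2.trans_le hlast,
        by rw [hsum _ le_rfl]; omega, y.2.trans_le hlast⟩

theorem alpha_separated_special_count_general (n m : ℕ) (hn : 2 ≤ n) (hm1 : 1 ≤ m) :
    Nat.card {p : Equiv.Perm (Fin n) × Equiv.Perm (Fin n) //
        IsFullCycle p.1 ∧ IsFullCycle p.2 ∧
        AlphaSeparated m (fun i => if i < m - 1 then 1 else n + 1 - m) (p.1 * p.2)} =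
    Nat.factorial (n - 1) * Nat.factorial (n - m) := by
  have hcount :=
    card_pairs_cyclesOn_univ_mul_apply_eq_self ({x | (x : ℕ) < m - 1} : Finset (Fin n))
  rw [Fintype.card_fin, Fin.card_filter_val_lt, show n - 1 - min n (m - 1) = n - m by omega]
    at hcount
  rw [← hcount]
  refine Nat.card_congr (Equiv.subtypeEquivRight fun p => ?_)
  rw [isFullCycle_iff_mem_cyclesOn_univ (by omega), isFullCycle_iff_mem_cyclesOn_univ (by omega),
    alphaSeparated_iff_forall_lt_apply_eq_self hm1]

/-- For `n ≥ 2` and `1 ≤ m ≤ n`, let `α = (1, 1, …, 1, n+1-m)` be the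
composition of `n` with `m-1` parts equal to `1` followed by one part `n+1-m` (so `m`
parts in total). Then the number of ordered pairs `(u, v)` of `n`-cycles on `[n]` whose
product `u ∘ v` is `α`-separated equals `(n-1)! (n-m)!`. -/
theorem alpha_separated_special_count (n m : ℕ) (hn : 2 ≤ n) (hm1 : 1 ≤ m) (hm : m ≤ n) :
    Nat.card {p : Equiv.Perm (Fin n) × Equiv.Perm (Fin n) //
        IsFullCycle p.1 ∧ IsFullCycle p.2 ∧
        AlphaSeparated m (fun i => if i < m - 1 then 1 else n + 1 - m) (p.1 * p.2)} =
    Nat.factorial (n - 1) * Nat.factorial (n - m) :=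
  alpha_separated_special_count_general n m hn hm1
end
end

section
/- Let n ≥ 1, 0 ≤ m ≤ n, and k ≥ 1. Then the sum, over all ordered pairs (s, π) where s is an n-cycle on [n] and π is a permutation of [n] with exactly k cycles that separates [m], of the number of exceedances of the pair (s, π), equals (n−1)! · ( binom(n−m, 2) + m(n−m) ) · C_m(n−1, k). -/
open Equiv Finset

noncomputable section

/-- The number of exceedances of the pair `(s, π)`, where the linear order `<_s` lists the
elements of `Fin n` in the order `0, s 0, s² 0, …, s^(n-1) 0` (`0` playing the role of the
element `1` of `[n]`): an exceedance is an `x` with `x <_s π x`, i.e. `x` occurs at an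
earlier position `a` than the position `b` of `π x`. -/
def exceedCount {n : ℕ} [NeZero n] (s π : Equiv.Perm (Fin n)) : ℕ :=
  Nat.card {x : Fin n // ∃ a b : ℕ, a < b ∧ b < n ∧ (s ^ a) 0 = x ∧ (s ^ b) 0 = π x}

/-!
Every `n`-cycle is `g * finRotate n * g⁻¹` for a unique `g` fixing `0`, and then `<_s`
compares the positions `g⁻¹ x`: the exceedances of `(s, π)` are the `y` with `y < ρ y`, where
`ρ = g⁻¹ * π * g`. Replacing `g` by `g ∘ neg` reverses the cycle, and
`[y < ρ y] + [-y < -ρ y]` is `[ρ y ≠ y]` up to a correction at `0` that sums to zero over `y`.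
Hence twice the sum over `n`-cycles is `(n-1)!` times the number of points moved by `π`.

That number is summed over the `π` with `k` cycles separating `[m]` point by point. A `π`
moving `x` is a permutation of the other `n - 1` points with `x` inserted before some `q` in its
cycle; this keeps the number of cycles, and keeps `[m]` separated for all `n - 1` choices of `q`
when `x ∉ [m]`, and for the `n - m` choices `q ∉ [m]` when `x ∈ [m]`. The total
`(n - m)(n - 1 + m) C_m(n-1, k)` is `2 (binom(n-m, 2) + m(n-m)) C_m(n-1, k)`.
-/

section

open Equiv.Perm

variable {n : ℕ}

theorem Equiv.Perm.SameCycle.map_of_forall_sameCycle_apply {α β : Type*} {σ : Perm α}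
    {τ : Perm β} {f : α → β} (h : ∀ u, τ.SameCycle (f u) (f (σ u))) {u v : α}
    (huv : σ.SameCycle u v) : τ.SameCycle (f u) (f v) := by
  obtain ⟨i, rfl⟩ := huv
  induction i using Int.induction_on with
  | zero => exact .refl _ _
  | succ i ih =>
    rw [add_comm, zpow_one_add, Equiv.Perm.mul_apply]
    exact ih.trans (h _)
  | pred i ih =>
    have := h ((σ ^ (-(i : ℤ) - 1)) u)
    rw [← Equiv.Perm.mul_apply, ← zpow_one_add, add_sub_cancel] at this
    exact ih.trans this.symm

theorem Equiv.Perm.nat_card_quotient_sameCycle_eq_of_surjective {α β : Type*} {σ : Perm α}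
    {τ : Perm β} {f : α → β} (hf : f.Surjective)
    (h : ∀ u v, σ.SameCycle u v ↔ τ.SameCycle (f u) (f v)) :
    Nat.card (Quotient (SameCycle.setoid σ)) = Nat.card (Quotient (SameCycle.setoid τ)) := by
  refine Nat.card_congr (Equiv.ofBijective (Quotient.map f fun u v => (h u v).1) ⟨?_, ?_⟩)
  · rintro ⟨u⟩ ⟨v⟩ huv
    exact Quotient.sound ((h u v).2 (Quotient.exact huv))
  · rintro ⟨w⟩
    obtain ⟨u, rfl⟩ := hf w
    exact ⟨⟦u⟧, rfl⟩

theorem Set.pairwise_not_sameCycle_iff {α β : Type*} {σ : Perm α} {τ : Perm β}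
    {f : α → β} (h : ∀ u v, σ.SameCycle u v ↔ τ.SameCycle (f u) (f v)) (S : Set α) :
    S.Pairwise (fun u v => ¬σ.SameCycle u v) ↔
      S.InjOn f ∧ (f '' S).Pairwise fun u v => ¬τ.SameCycle u v := by
  have hon :
      (fun u v => ¬σ.SameCycle u v) = Function.onFun (fun u v => ¬τ.SameCycle u v) f := by
    ext u v
    simp [h]
  refine ⟨fun hS => ?_, fun ⟨hinj, hpair⟩ => hon ▸ hinj.pairwise_image.1 hpair⟩
  have hinj : S.InjOn f := fun u hu v hv huv =>
    by_contra fun hne => hS hu hv hne ((h u v).2 (huv ▸ SameCycle.refl _ _))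
  exact ⟨hinj, hinj.pairwise_image.2 (hon ▸ hS)⟩

theorem Finset.exists_perm_image_eq {α : Type*} [Fintype α] [DecidableEq α] {S T : Finset α}
    (h : #S = #T) : ∃ τ : Perm α, S.image τ = T := by
  let e : S ≃ T := Finset.equivOfCardEq h
  refine ⟨e.extendSubtype, eq_of_subset_of_card_le ?_ ?_⟩
  · intro y hy
    obtain ⟨x, hx, rfl⟩ := mem_image.1 hy
    exact e.extendSubtype_mem x hx
  · rw [card_image_of_injective _ (Equiv.injective _), h]

theorem Nat.Partition.parts_eq_singleton_of_card_parts_eq_one {p : n.Partition}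
    (hp : p.parts.card = 1) : p.parts = {n} := by
  obtain ⟨a, ha⟩ := Multiset.card_eq_one.1 hp
  have hsum := p.parts_sum
  rw [ha, Multiset.sum_singleton] at hsum
  rw [ha, hsum]

theorem cycleCount_eq_nat_card_quotient (σ : Perm (Fin n)) :
    cycleCount σ = Nat.card (Quotient (SameCycle.setoid σ)) := by
  classical
  let F : Quotient (SameCycle.setoid σ) → σ.cycleFactorsFinset ⊕ {x // σ x = x} :=
    Quotient.lift
      (fun x => if hx : σ x = x then .inr ⟨x, hx⟩
        else .inl ⟨σ.cycleOf x, cycleOf_mem_cycleFactorsFinset_iff.2 (mem_support.2 hx)⟩)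
      fun x y (hxy : σ.SameCycle x y) => by
        by_cases hx : σ x = x
        · obtain rfl := hxy.eq_of_left hx
          rfl
        · have hy : σ y ≠ y := fun hy => hx (hxy.apply_eq_self_iff.2 hy)
          simp only [dif_neg hx, dif_neg hy, hxy.cycleOf_eq]
  have hF : F.Bijective := by
    refine ⟨?_, ?_⟩
    · rintro ⟨x⟩ ⟨y⟩ hxy
      refine Quotient.sound ?_
      by_cases hx : σ x = x <;> by_cases hy : σ y = y <;>
        simp only [F, dif_pos, dif_neg, hx, hy, not_false_eq_true,
          Sum.inr.injEq, Sum.inl.injEq, Subtype.mk.injEq, reduceCtorEq] at hxy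
      · rw [hxy]
      · exact (mem_support_cycleOf_iff.1 (hxy ▸ mem_support_cycleOf_iff.2
          ⟨SameCycle.refl σ y, mem_support.2 hy⟩)).1
    · rintro (⟨c, hc⟩ | ⟨x, hx⟩)
      · obtain ⟨x, hx⟩ := (mem_cycleFactorsFinset_iff.1 hc).1.nonempty_support
        have hσx := mem_cycleFactorsFinset_support_le hc hx
        refine ⟨⟦x⟧, ?_⟩
        simp only [F, Quotient.lift_mk, dif_neg (mem_support.1 hσx),
          (cycle_is_cycleOf hx hc).symm]
      · exact ⟨⟦x⟧, by simp only [F, Quotient.lift_mk, dif_pos hx]⟩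
  rw [Nat.card_congr (Equiv.ofBijective F hF), Nat.card_sum, cycleCount, cycleType_def,
    Multiset.card_map, Nat.card_eq_fintype_card, Nat.card_eq_fintype_card,
    Fintype.card_coe, Fintype.card_subtype]
  rfl

theorem cycleCount_eq_card_parts (σ : Perm (Fin n)) :
    cycleCount σ = σ.partition.parts.card := by
  rw [cycleCount, parts_partition, Multiset.card_add, Multiset.card_replicate, cycleType_def,
    Multiset.card_map]
  congr 1
  rw [← Finset.card_compl]
  congr 1
  ext x
  simp

theorem cycleCount_conj (τ σ : Perm (Fin n)) :
    cycleCount (τ * σ * τ⁻¹) = cycleCount σ := by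
  rw [cycleCount_eq_card_parts, cycleCount_eq_card_parts,
    ← partition_eq_of_isConj.1 (isConj_iff.2 ⟨τ, rfl⟩ : IsConj σ (τ * σ * τ⁻¹))]

theorem isFullCycle_iff_isConj {s t : Perm (Fin n)} (ht : IsFullCycle t) :
    IsFullCycle s ↔ IsConj s t := by
  unfold IsFullCycle at ht ⊢
  rw [cycleCount_eq_card_parts] at ht ⊢
  rw [partition_eq_of_isConj]
  refine ⟨fun hs => ?_, fun hst => hst ▸ ht⟩
  ext1
  rw [Nat.Partition.parts_eq_singleton_of_card_parts_eq_one hs,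
    Nat.Partition.parts_eq_singleton_of_card_parts_eq_one ht]

theorem finRotate_pow_val_apply_zero (x : Fin (n + 1)) : (finRotate (n + 1) ^ (x : ℕ)) 0 = x := by
  induction x using Fin.induction with
  | zero => rfl
  | succ i ih =>
    rw [Fin.val_succ, pow_succ', Equiv.Perm.mul_apply, ← Fin.val_castSucc, ih, finRotate_apply,
      Fin.coeSucc_eq_succ]

theorem isFullCycle_finRotate : IsFullCycle (finRotate (n + 1)) := by
  have hsame : ∀ x, (finRotate (n + 1)).SameCycle 0 x := fun x =>
    ⟨x.val, by rw [zpow_natCast, finRotate_pow_val_apply_zero]⟩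
  rw [IsFullCycle, cycleCount_eq_nat_card_quotient, Nat.card_eq_one_iff_unique]
  refine ⟨⟨?_⟩, ⟨⟦0⟧⟩⟩
  rintro ⟨x⟩ ⟨y⟩
  exact Quotient.sound ((hsame x).symm.trans (hsame y))

theorem IsFullCycle.exists_conj_finRotate {s : Perm (Fin (n + 1))} (hs : IsFullCycle s) :
    ∃ g : Perm (Fin (n + 1)), g 0 = 0 ∧ g * finRotate (n + 1) * g⁻¹ = s := by
  obtain ⟨h, rfl⟩ := isConj_iff.1 ((isFullCycle_iff_isConj isFullCycle_finRotate).1 hs).symm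
  refine ⟨h * finRotate (n + 1) ^ (h⁻¹ 0 : ℕ), ?_, ?_⟩
  · rw [Equiv.Perm.mul_apply, finRotate_pow_val_apply_zero, Equiv.Perm.inv_def,
      Equiv.apply_symm_apply]
  · group

theorem eq_one_of_commute_finRotate {c : Perm (Fin (n + 1))}
    (hc : Commute c (finRotate (n + 1))) (h0 : c 0 = 0) : c = 1 := by
  ext x : 1
  rw [← finRotate_pow_val_apply_zero x, ← Equiv.Perm.mul_apply,
    (hc.pow_right _).eq, Equiv.Perm.mul_apply, h0, Equiv.Perm.one_apply]

theorem injOn_conj_finRotate :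
    Set.InjOn (fun g : Perm (Fin (n + 1)) => g * finRotate (n + 1) * g⁻¹) {g | g 0 = 0} := by
  intro g hg h hh hgh
  have hc : Commute (h⁻¹ * g) (finRotate (n + 1)) := by
    have hconj :
        h⁻¹ * g * finRotate (n + 1) = h⁻¹ * (g * finRotate (n + 1) * g⁻¹) * g := by
      group
    rw [Commute, SemiconjBy, hconj, show g * _ * g⁻¹ = h * _ * h⁻¹ from hgh]
    group
  have := eq_one_of_commute_finRotate hc (by
    rw [Equiv.Perm.mul_apply, hg, Equiv.Perm.inv_eq_iff_eq, hh])
  exact (inv_mul_eq_one.1 this).symm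

theorem conj_finRotate_pow_val_apply_zero {g : Perm (Fin (n + 1))} (hg : g 0 = 0)
    (x : Fin (n + 1)) : ((g * finRotate (n + 1) * g⁻¹) ^ (x : ℕ)) 0 = g x := by
  rw [conj_pow, Equiv.Perm.mul_apply, Equiv.Perm.mul_apply, Equiv.Perm.inv_eq_iff_eq.2 hg.symm,
    finRotate_pow_val_apply_zero]

theorem exceedCount_conj_finRotate {g : Perm (Fin (n + 1))} (hg : g 0 = 0)
    (π : Perm (Fin (n + 1))) :
    exceedCount (g * finRotate (n + 1) * g⁻¹) π = #{y | y < (g⁻¹ * π * g) y} := by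
  classical
  have hpow := conj_finRotate_pow_val_apply_zero hg
  rw [exceedCount, Nat.card_eq_fintype_card, Fintype.card_subtype]
  generalize g * finRotate (n + 1) * g⁻¹ = s at hpow ⊢
  refine Finset.card_equiv (g⁻¹ : Perm (Fin (n + 1))) fun x => ?_
  simp only [mem_filter, mem_univ, true_and]
  simp only [Equiv.Perm.mul_apply, Equiv.Perm.coe_inv, Equiv.apply_symm_apply]
  constructor
  · rintro ⟨a, b, hab, hb, hx, hπx⟩
    have ha := hpow ⟨a, hab.trans hb⟩
    have hb := hpow ⟨b, hb⟩
    dsimp only at ha hb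
    rwa [← hπx, ← hx, ha, hb, Equiv.symm_apply_apply, Equiv.symm_apply_apply, Fin.mk_lt_mk]
  · intro h
    exact ⟨_, _, h, (g.symm (π x)).isLt, by rw [hpow, Equiv.apply_symm_apply],
      by rw [hpow, Equiv.apply_symm_apply]⟩

theorem Fin.ite_lt_add_ite_neg_lt (a b : Fin (n + 1)) :
    ((if a < b then 1 else 0) + (if -a < -b then 1 else 0) + if b = 0 then 1 else 0) =
      (if b ≠ a then 1 else 0) + if a = 0 then 1 else 0 := by
  simp only [Fin.lt_def, Fin.val_neg, ne_eq, Fin.ext_iff, Fin.coe_ofNat_eq_mod, Nat.zero_mod]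
  have := a.isLt
  have := b.isLt
  split_ifs <;> omega

theorem card_lt_add_card_neg_lt (ρ : Perm (Fin (n + 1))) :
    #{y | y < ρ y} + #{y | -y < -ρ y} = #ρ.support := by
  have hsum := Finset.sum_congr rfl fun y (_ : y ∈ univ) => Fin.ite_lt_add_ite_neg_lt y (ρ y)
  simp only [Finset.sum_add_distrib, ← Finset.card_filter] at hsum
  have hzero : #{y | ρ y = 0} = #{y : Fin (n + 1) | y = 0} :=
    Finset.card_equiv ρ fun y => by simp
  rw [support]
  omega

theorem card_filter_perm_fin_succ (P : Perm (Fin (n + 1)) → Prop) [DecidablePred P] :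
    #{σ | P σ} = #{e | P (decomposeFin.symm (0, e))} +
      ∑ q : Fin n, #{e | P (decomposeFin.symm (q.succ, e))} := by
  simp only [card_filter]
  rw [← Equiv.sum_comp decomposeFin.symm, Fintype.sum_prod_type, Fin.sum_univ_succ]

theorem card_filter_apply_zero_eq_zero : #{g : Perm (Fin (n + 1)) | g 0 = 0} = n.factorial := by
  simp [card_filter_perm_fin_succ, decomposeFin_symm_apply_zero, Fin.succ_ne_zero,
    Fintype.card_perm]

open scoped Classical in
theorem image_conj_finRotate :
    ({g | g 0 = 0} : Finset (Perm (Fin (n + 1)))).image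
      (fun g => g * finRotate (n + 1) * g⁻¹) = ({s | IsFullCycle s} : Finset _) := by
  ext s
  simp only [mem_image, mem_filter, mem_univ, true_and]
  refine ⟨?_, IsFullCycle.exists_conj_finRotate⟩
  rintro ⟨g, -, rfl⟩
  exact (isFullCycle_iff_isConj isFullCycle_finRotate).2 (isConj_iff.2 ⟨g, rfl⟩).symm

open scoped Classical in
theorem two_mul_sum_exceedCount (π : Perm (Fin (n + 1))) :
    2 * ∑ s with IsFullCycle s, exceedCount s π = n.factorial * #π.support := by
  rw [← image_conj_finRotate, sum_image (injOn_conj_finRotate.mono (by simp)),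
    sum_congr rfl fun g hg => exceedCount_conj_finRotate (mem_filter.1 hg).2 π]
  have hreflect : ∑ g with g 0 = 0, #{y | y < (g⁻¹ * π * g) y} =
      ∑ g with g 0 = 0, #{y | -y < -(g⁻¹ * π * g) y} := by
    -- `g ↦ g * neg` reverses the orientation of the cycle, keeping `0` first.
    refine sum_equiv (Equiv.mulRight (Equiv.neg (Fin (n + 1)))) (fun g => ?_) fun g _ => ?_
    · simp
    · refine card_equiv (Equiv.neg (Fin (n + 1))) fun y => ?_
      simp [mul_assoc]
  have hsupport (g : Perm (Fin (n + 1))) : #(g⁻¹ * π * g).support = #π.support := by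
    simpa using card_support_conj (σ := g⁻¹) (τ := π)
  rw [two_mul, ← card_filter_apply_zero_eq_zero, ← smul_eq_mul, ← sum_const]
  nth_rewrite 2 [hreflect]
  rw [← sum_add_distrib]
  exact sum_congr rfl fun g _ => (card_lt_add_card_neg_lt _).trans (hsupport g)

open scoped Classical in
def sepPerms (S : Finset (Fin n)) (k : ℕ) : Finset (Perm (Fin n)) :=
  {σ | cycleCount σ = k ∧ (S : Set (Fin n)).Pairwise fun i j => ¬σ.SameCycle i j}

theorem mem_sepPerms {S : Finset (Fin n)} {k : ℕ} {σ : Perm (Fin n)} :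
    σ ∈ sepPerms S k ↔
      cycleCount σ = k ∧ (S : Set (Fin n)).Pairwise fun i j => ¬σ.SameCycle i j := by
  simp [sepPerms]

theorem conj_mem_sepPerms_image_iff (S : Finset (Fin n)) (k : ℕ) (τ σ : Perm (Fin n)) :
    τ * σ * τ⁻¹ ∈ sepPerms (S.image τ) k ↔ σ ∈ sepPerms S k := by
  have h u v : σ.SameCycle u v ↔ (τ * σ * τ⁻¹).SameCycle (τ u) (τ v) := by
    simp [sameCycle_conj]
  rw [mem_sepPerms, mem_sepPerms, cycleCount_conj, coe_image,
    Set.pairwise_not_sameCycle_iff h, and_iff_right τ.injective.injOn]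

theorem card_filter_sepPerms_conj (S : Finset (Fin n)) (k : ℕ) (τ : Perm (Fin n))
    (p : Perm (Fin n) → Prop) [DecidablePred p] :
    #{σ ∈ sepPerms S k | p σ} = #{σ ∈ sepPerms (S.image τ) k | p (τ⁻¹ * σ * τ)} :=
  card_equiv (MulAut.conj τ).toEquiv fun σ => by
    simp only [mem_filter, MulEquiv.toEquiv_eq_coe, MulEquiv.coe_toEquiv, MulAut.conj_apply,
      conj_mem_sepPerms_image_iff]
    rw [show τ⁻¹ * (τ * σ * τ⁻¹) * τ = σ by group]

theorem mem_sepPerms_filter_val_lt_iff (m k : ℕ) (σ : Perm (Fin n)) :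
    σ ∈ sepPerms {i : Fin n | (i : ℕ) < m} k ↔ cycleCount σ = k ∧ Separates m σ := by
  simp only [mem_sepPerms, Separates, coe_filter, mem_univ, true_and, Set.Pairwise,
    Set.mem_ofPred_eq]
  exact and_congr_right' ⟨fun h i j hi hj => h hi hj, fun h i hi j hj => h i j hi hj⟩

theorem sepCount_eq_card_sepPerms (m k : ℕ) :
    sepCount n m k = #(sepPerms {i : Fin n | (i : ℕ) < m} k) := by
  classical
  rw [sepCount, Nat.card_eq_fintype_card, Fintype.card_subtype]
  congr 1
  ext σ
  rw [mem_filter, mem_sepPerms_filter_val_lt_iff, and_iff_right (mem_univ σ)]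

theorem card_sepPerms (S : Finset (Fin n)) (k : ℕ) : #(sepPerms S k) = sepCount n #S k := by
  have hcard : #S = #({i : Fin n | (i : ℕ) < #S} : Finset _) := by
    rw [Fin.card_filter_val_lt, min_eq_right (by simpa using card_le_univ S)]
  obtain ⟨τ, hτ⟩ := exists_perm_image_eq hcard
  simpa [hτ, sepCount_eq_card_sepPerms] using card_filter_sepPerms_conj S k τ fun _ => True

def collapseZero (q : Fin n) : Fin (n + 1) → Fin n := Fin.cons q id

@[simp] theorem collapseZero_zero (q : Fin n) : collapseZero q 0 = q := rfl

@[simp] theorem collapseZero_succ (q i : Fin n) : collapseZero q i.succ = i := rfl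

-- `decomposeFin.symm (q.succ, e)` is `e`, transported by `Fin.succ`, with `0` inserted into its
-- cycle just before `q.succ`.
theorem sameCycle_decomposeFin_symm_succ_iff (q : Fin n) (e : Perm (Fin n))
    (u v : Fin (n + 1)) :
    (decomposeFin.symm (q.succ, e)).SameCycle u v ↔
      e.SameCycle (collapseZero q u) (collapseZero q v) := by
  set σ := decomposeFin.symm (q.succ, e)
  have hσ0 : σ 0 = q.succ := decomposeFin_symm_apply_zero _ _
  have hσsucc (x : Fin n) : σ x.succ = if e x = q then 0 else (e x).succ := by
    rw [decomposeFin_symm_apply_succ, swap_apply_def]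
    simp [Fin.succ_ne_zero, Fin.succ_inj]
  have hcollapse (u : Fin (n + 1)) :
      e.SameCycle (collapseZero q u) (collapseZero q (σ u)) := by
    cases u using Fin.cases with
    | zero => simpa [hσ0] using SameCycle.refl e q
    | succ x =>
      rw [hσsucc]
      split_ifs with hx
      · simpa [← hx] using (SameCycle.refl e x).apply_right
      · simpa using (SameCycle.refl e x).apply_right
  have hlift (x : Fin n) : σ.SameCycle x.succ (e x).succ := by
    by_cases hx : e x = q
    · have := (SameCycle.refl σ x.succ).apply_right.apply_right
      rwa [hσsucc, if_pos hx, hσ0, ← hx] at this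
    · have := (SameCycle.refl σ x.succ).apply_right
      rwa [hσsucc, if_neg hx] at this
  have hrep (u : Fin (n + 1)) : σ.SameCycle u (collapseZero q u).succ := by
    cases u using Fin.cases with
    | zero => exact ⟨1, by simp [hσ0]⟩
    | succ x => exact .refl _ _
  refine ⟨SameCycle.map_of_forall_sameCycle_apply hcollapse, fun h => ?_⟩
  exact (hrep u).trans ((SameCycle.map_of_forall_sameCycle_apply hlift h).trans (hrep v).symm)

theorem cycleCount_decomposeFin_symm_succ (q : Fin n) (e : Perm (Fin n)) :
    cycleCount (decomposeFin.symm (q.succ, e)) = cycleCount e := by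
  rw [cycleCount_eq_nat_card_quotient, cycleCount_eq_nat_card_quotient]
  exact nat_card_quotient_sameCycle_eq_of_surjective (fun x => ⟨x.succ, rfl⟩)
    (sameCycle_decomposeFin_symm_succ_iff q e)

theorem decomposeFin_symm_succ_mem_sepPerms_iff (S : Finset (Fin (n + 1))) (k : ℕ) (q : Fin n)
    (e : Perm (Fin n)) :
    decomposeFin.symm (q.succ, e) ∈ sepPerms S k ↔
      Set.InjOn (collapseZero q) S ∧ e ∈ sepPerms (S.image (collapseZero q)) k := by
  rw [mem_sepPerms, mem_sepPerms, cycleCount_decomposeFin_symm_succ, coe_image,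
    Set.pairwise_not_sameCycle_iff (sameCycle_decomposeFin_symm_succ_iff q e)]
  tauto

theorem card_filter_sepPerms_apply_zero_ne (S : Finset (Fin (n + 1))) (k : ℕ) :
    #{σ ∈ sepPerms S k | σ 0 ≠ 0} =
      #{q : Fin n | Set.InjOn (collapseZero q) S} * sepCount n #S k := by
  have hterm (q : Fin n) :
      #{e | Set.InjOn (collapseZero q) S ∧ e ∈ sepPerms (S.image (collapseZero q)) k} =
        if Set.InjOn (collapseZero q) S then sepCount n #S k else 0 := by
    split_ifs with hinj
    · simp only [hinj, true_and]
      rw [filter_univ_mem, card_sepPerms, card_image_of_injOn hinj]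
    · simp [hinj]
  rw [show {σ ∈ sepPerms S k | σ 0 ≠ 0} =
      ({σ | σ ∈ sepPerms S k ∧ σ 0 ≠ 0} : Finset _) by ext; simp,
    card_filter_perm_fin_succ]
  simp only [decomposeFin_symm_apply_zero, ne_eq, not_true_eq_false, and_false, filter_false,
    card_empty, zero_add, Fin.succ_ne_zero, not_false_eq_true, and_true,
    decomposeFin_symm_succ_mem_sepPerms_iff, hterm]
  rw [← sum_filter, sum_const, smul_eq_mul]

theorem injOn_collapseZero_iff (S : Finset (Fin (n + 1))) (q : Fin n) :
    Set.InjOn (collapseZero q) S ↔ ¬(0 ∈ S ∧ q.succ ∈ S) := by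
  constructor
  · rintro hinj ⟨h0, hq⟩
    exact Fin.succ_ne_zero q (hinj hq h0 rfl)
  · intro h u hu v hv huv
    cases u using Fin.cases <;> cases v using Fin.cases <;>
      simp_all [eq_comm]

theorem card_filter_injOn_collapseZero (S : Finset (Fin (n + 1))) :
    #{q : Fin n | Set.InjOn (collapseZero q) S} = if 0 ∈ S then n + 1 - #S else n := by
  simp only [injOn_collapseZero_iff]
  have hS := Fin.card_filter_univ_succ (· ∈ S)
  rw [filter_univ_mem] at hS
  split_ifs at hS ⊢ with h0
  · have := card_filter_add_card_filter_not (s := (univ : Finset (Fin n))) (p := (·.succ ∈ S))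
    simp only [card_univ, Fintype.card_fin] at this
    simp only [h0, true_and]
    omega
  · simp [h0]

theorem card_filter_sepPerms_apply_ne (S : Finset (Fin (n + 1))) (k : ℕ) (x : Fin (n + 1)) :
    #{σ ∈ sepPerms S k | σ x ≠ x} =
      (if x ∈ S then n + 1 - #S else n) * sepCount n #S k := by
  have hx : x ∈ S ↔ 0 ∈ S.image (swap x 0) := by
    simpa using ((swap x 0).injective.mem_finset_image (a := x) (s := S)).symm
  simp only [card_filter_sepPerms_conj S k (swap x 0), hx,
    ← card_image_of_injective S (swap x 0).injective]
  rw [← card_filter_injOn_collapseZero, ← card_filter_sepPerms_apply_zero_ne]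
  congr 1
  refine filter_congr fun σ _ => ?_
  simp [swap_apply_eq_iff]

theorem sum_card_support_sepPerms (S : Finset (Fin (n + 1))) (k : ℕ) :
    ∑ σ ∈ sepPerms S k, #σ.support = (n + 1 - #S) * (n + #S) * sepCount n #S k := by
  have hdouble := sum_card_bipartiteAbove_eq_sum_card_bipartiteBelow (s := sepPerms S k)
    (t := univ) (fun σ x => σ x ≠ x)
  simp only [bipartiteAbove, bipartiteBelow] at hdouble
  refine hdouble.trans ?_
  have hcompl : #{x | x ∉ S} = n + 1 - #S := by
    have := card_filter_add_card_filter_not (s := univ) (p := (· ∈ S))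
    rw [filter_univ_mem, card_univ, Fintype.card_fin] at this
    omega
  simp only [card_filter_sepPerms_apply_ne, ← sum_mul, sum_ite, sum_const, smul_eq_mul,
    filter_univ_mem, hcompl]
  ring

theorem Nat.two_mul_choose_two_add_mul (j m : ℕ) :
    2 * (j.choose 2 + m * j) = j * (j + 2 * m - 1) := by
  rw [mul_add, Nat.choose_two_right, Nat.mul_div_cancel' (Nat.even_mul_pred_self j).two_dvd]
  cases j with
  | zero => simp
  | succ j =>
    rw [Nat.add_sub_cancel, show j + 1 + 2 * m - 1 = j + 2 * m by omega]
    ring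

end

open scoped Classical in
theorem total_exceedances_general (n m k : ℕ) [NeZero n] (hm : m ≤ n) :
    ∑ p ∈ Finset.univ.filter
        (fun p : Equiv.Perm (Fin n) × Equiv.Perm (Fin n) =>
          IsFullCycle p.1 ∧ cycleCount p.2 = k ∧ Separates m p.2),
      exceedCount p.1 p.2 =
    Nat.factorial (n - 1) * (Nat.choose (n - m) 2 + m * (n - m)) * sepCount (n - 1) m k := by
  obtain ⟨N, rfl⟩ : ∃ N, n = N + 1 := ⟨n - 1, (Nat.sub_add_cancel NeZero.one_le).symm⟩
  have hpairs : Finset.univ.filter (fun p : Perm (Fin (N + 1)) × Perm (Fin (N + 1)) =>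
      IsFullCycle p.1 ∧ cycleCount p.2 = k ∧ Separates m p.2) =
      ({s | IsFullCycle s} : Finset _) ×ˢ sepPerms {i | (i : ℕ) < m} k := by
    ext ⟨s, π⟩
    simp [mem_sepPerms_filter_val_lt_iff]
  have hcard : #({i | (i : ℕ) < m} : Finset (Fin (N + 1))) = m := by
    rw [Fin.card_filter_val_lt, min_eq_right hm]
  have hcoeff : 2 * ((N + 1 - m).choose 2 + m * (N + 1 - m)) = (N + 1 - m) * (N + m) := by
    rw [Nat.two_mul_choose_two_add_mul]
    congr 1
    omega
  apply Nat.eq_of_mul_eq_mul_left two_pos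
  rw [hpairs, sum_product_right, mul_sum, sum_congr rfl fun π _ => two_mul_sum_exceedCount π,
    ← mul_sum, sum_card_support_sepPerms, hcard, Nat.add_sub_cancel, ← hcoeff]
  ring

open scoped Classical in
/-- For `n ≥ 1`, `m ≤ n` and `k ≥ 1`, the sum over all pairs `(s, π)`,
with `s` an `n`-cycle and `π` a permutation of `[n]` with `k` cycles separating `[m]`, of
the number of exceedances of `(s, π)` equals
`(n-1)! ( binom(n-m, 2) + m(n-m) ) C_m(n-1, k)`. -/
theorem total_exceedances (n m k : ℕ) [NeZero n] (hm : m ≤ n) (hk : 1 ≤ k) :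
    ∑ p ∈ Finset.univ.filter
        (fun p : Equiv.Perm (Fin n) × Equiv.Perm (Fin n) =>
          IsFullCycle p.1 ∧ cycleCount p.2 = k ∧ Separates m p.2),
      exceedCount p.1 p.2 =
    Nat.factorial (n - 1) * (Nat.choose (n - m) 2 + m * (n - m)) * sepCount (n - 1) m k :=
  total_exceedances_general n m k hm
end
end

section
/- Let 1 ≤ m ≤ n and m ≤ k. Then C_m(n, k) = Σ_{d=0}^{n−m} binom(n−m, d) · binom(d+m−1, d) · d! · C(n−m−d, k−m), where the d-th term counts the permutations in which exactly d of the elements of [n] \ [m] lie in the m cycles containing 1, …, m. -/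
/-!
Inserting a new point into a permutation of `α`, either as a fixed point or directly before one of
the old points, is Mathlib's bijection `Perm (Option α) ≃ Option α × Perm α`
(`decomposeOption`). It does not change which old points share a cycle, and it creates a new
cycle exactly in the fixed-point case. Hence `C_m(n+1, k+1) = C_m(n, k) + n C_m(n, k+1)` for
`m ≤ n`, which for `m = 0` is the Stirling recurrence. Writing `n = m + N`, the right-hand side
satisfies the same recurrence in `N`: the factor `m + N = (N - d) + (m + d)` splits between the
Stirling recurrence for `C(N - d, ·)` and `m^(d+1) = (m + d) m^(d)` for the rising factorial
`m^(d) = binom(d+m-1, d) d!`. The two sides agree for `N = 0`, and for `k = m` because fewer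
than `m` cycles cannot separate `m` points.
-/

open Equiv Finset

noncomputable section

theorem Equiv.apply_some_eq_some_removeNone_or {α β : Type*} (e : Option α ≃ Option β) (a : α) :
    e (some a) = some (removeNone e a) ∨ e (some a) = none ∧ e none = some (removeNone e a) := by
  cases h : e (some a) with
  | none => exact Or.inr ⟨rfl, (removeNone_none e h).symm⟩
  | some b => exact Or.inl ((removeNone_some e ⟨b, h⟩).trans h).symm

namespace Equiv.Perm

variable {α β : Type*}

def numCycles (σ : Perm α) : ℕ := Nat.card (Quotient (SameCycle.setoid σ))

theorem numCycles_eq_card_cycleType_add [Fintype α] [DecidableEq α] (σ : Perm α) :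
    numCycles σ = Multiset.card σ.cycleType + #{x | σ x = x} := by
  -- the fibres of `φ` are the cycles: a nontrivial one goes to its cycle factor
  let φ : α → Perm α ⊕ α := fun x => if σ x = x then .inr x else .inl (σ.cycleOf x)
  have hker : SameCycle.setoid σ = Setoid.ker φ := by
    ext x y
    change σ.SameCycle x y ↔ φ x = φ y
    by_cases hx : σ x = x <;> by_cases hy : σ y = y <;> simp only [φ, hx, hy, if_true, if_false,
      reduceCtorEq, iff_false, Sum.inr.injEq, Sum.inl.injEq]
    · exact ⟨fun h => h.eq_of_left hx, fun h => h ▸ SameCycle.refl σ x⟩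
    · exact fun h => hy (h.apply_eq_self_iff.1 hx)
    · exact fun h => hx (h.apply_eq_self_iff.2 hy)
    · exact sameCycle_iff_cycleOf_eq_of_mem_support (mem_support.2 hx) (mem_support.2 hy)
  have hrange : Set.range φ = ↑(σ.cycleFactorsFinset.disjSum {x | σ x = x}) := by
    ext (c | y) <;> simp only [Set.mem_range, inl_mem_disjSum, inr_mem_disjSum, mem_coe,
      mem_filter_univ]
    · constructor
      · rintro ⟨x, hx⟩
        by_cases h : σ x = x <;> simp only [φ, h, if_true, if_false, reduceCtorEq,
          Sum.inl.injEq] at hx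
        exact hx ▸ cycleOf_mem_cycleFactorsFinset_iff.2 (mem_support.2 h)
      · intro hc
        obtain ⟨a, ha⟩ := (mem_cycleFactorsFinset_iff.1 hc).1.nonempty_support
        have hσa : σ a ≠ a := mem_support.1 (mem_cycleFactorsFinset_support_le hc ha)
        exact ⟨a, by simp [φ, hσa, cycle_is_cycleOf ha hc]⟩
    · constructor
      · rintro ⟨x, hx⟩
        by_cases h : σ x = x <;> simp only [φ, h, if_true, if_false, reduceCtorEq,
          Sum.inr.injEq] at hx
        exact hx ▸ h
      · exact fun h => ⟨y, by simp [φ, h]⟩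
  rw [numCycles, hker, Nat.card_congr (Setoid.quotientKerEquivRange φ), hrange,
    Nat.card_coe_set_eq, Set.ncard_coe_finset, card_disjSum, cycleType_def, Multiset.card_map]
  rfl

theorem numCycles_eq_of_sameCycle_iff {σ : Perm β} {τ : Perm α} (f : α → β)
    (hf : ∀ a b, σ.SameCycle (f a) (f b) ↔ τ.SameCycle a b)
    (hsurj : ∀ y, ∃ a, σ.SameCycle (f a) y) : numCycles σ = numCycles τ := by
  let g : Quotient (SameCycle.setoid τ) → Quotient (SameCycle.setoid σ) :=
    Quotient.map f fun a b => (hf a b).2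
  refine (Nat.card_eq_of_bijective g ⟨?_, ?_⟩).symm
  · rintro ⟨a⟩ ⟨b⟩ h
    exact Quotient.sound ((hf a b).1 (Quotient.exact h))
  · rintro ⟨y⟩
    obtain ⟨a, ha⟩ := hsurj y
    exact ⟨Quotient.mk _ a, Quotient.sound ha⟩

theorem sameCycle_permCongr_apply_iff (e : α ≃ β) (τ : Perm α) {a b : α} :
    (e.permCongr τ).SameCycle (e a) (e b) ↔ τ.SameCycle a b :=
  exists_congr fun i => by
    rw [← e.permCongrHom_coe, ← map_zpow, e.permCongrHom_coe, permCongr_apply, symm_apply_apply,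
      e.apply_eq_iff_eq]

theorem numCycles_permCongr (e : α ≃ β) (τ : Perm α) : numCycles (e.permCongr τ) = numCycles τ :=
  numCycles_eq_of_sameCycle_iff e (fun _ _ => sameCycle_permCongr_apply_iff e τ)
    fun y => ⟨e.symm y, by rw [e.apply_symm_apply]⟩

theorem numCycles_one : numCycles (1 : Perm α) = Nat.card α :=
  (Nat.card_eq_of_bijective (Quotient.mk (SameCycle.setoid 1))
    ⟨fun _ _ h => sameCycle_one.1 (Quotient.exact h), Quotient.mk_surjective⟩).symm

theorem numCycles_pos [Finite α] [h : Nonempty α] (σ : Perm α) : 0 < numCycles σ :=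
  have := h.map (Quotient.mk (SameCycle.setoid σ))
  Nat.card_pos

theorem ncard_le_numCycles_of_pairwise [Finite α] {σ : Perm α} {S : Set α}
    (hS : S.Pairwise fun i j => ¬ σ.SameCycle i j) : S.ncard ≤ numCycles σ := by
  rw [← Nat.card_coe_set_eq]
  refine Nat.card_le_card_of_injective (fun i => Quotient.mk (SameCycle.setoid σ) (i : α)) ?_
  intro i j h
  by_contra hij
  exact hS i.2 j.2 (Subtype.coe_ne_coe.2 hij) (Quotient.exact h)

/-- `removeNone σ` is the first-return map of `σ` on the points `some a`, so it has the same
cycles there. -/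
theorem sameCycle_some_some_iff [Finite α] (σ : Perm (Option α)) {a b : α} :
    σ.SameCycle (some a) (some b) ↔ SameCycle (removeNone σ) a b := by
  set τ : Perm α := removeNone σ
  have hτ : ∀ c, σ (some c) = some (τ c) ∨ σ (some c) = none ∧ σ none = some (τ c) :=
    apply_some_eq_some_removeNone_or σ
  constructor
  · intro h
    obtain ⟨k, hk⟩ := h.exists_nat_pow_eq
    -- the `τ`-cycle of `a`, together with `none` if `σ none` lies in it, is `σ`-invariant
    let P : Option α → Prop := fun z => z.elim (∀ c, σ none = some c → τ.SameCycle a c)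
      (τ.SameCycle a)
    have hP (z : Option α) (hz : P z) : P (σ z) := by
      rcases z with _ | c
      · cases hn : σ none with
        | none => simp [P, hn]
        | some c => exact hz c hn
      · rcases hτ c with hc | ⟨hc, hn⟩
        · simpa [P, hc] using sameCycle_apply_right.2 hz
        · simp only [P, hc, hn, Option.elim, Option.some.injEq, forall_eq']
          exact sameCycle_apply_right.2 hz
    have hPk (j : ℕ) : P ((σ ^ j) (some a)) := by
      induction j with
      | zero => exact SameCycle.refl τ a
      | succ j ih => rw [pow_succ', mul_apply]; exact hP _ ih
    simpa [P, hk] using hPk k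
  · intro h
    obtain ⟨k, rfl⟩ := h.exists_nat_pow_eq
    clear h
    induction k with
    | zero => exact SameCycle.refl σ _
    | succ k ih =>
      refine ih.trans ?_
      rw [pow_succ', mul_apply]
      rcases hτ ((τ ^ k) a) with hc | ⟨hc, hn⟩
      · exact hc ▸ sameCycle_apply_right.2 (SameCycle.refl σ _)
      · rw [← hn, ← hc]
        exact sameCycle_apply_right.2 (sameCycle_apply_right.2 (SameCycle.refl σ _))

theorem numCycles_of_apply_none_ne_none [Finite α] {σ : Perm (Option α)} (h : σ none ≠ none) :
    numCycles σ = numCycles (removeNone σ) := by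
  obtain ⟨x, hx⟩ := Option.ne_none_iff_exists'.1 h
  refine numCycles_eq_of_sameCycle_iff some (fun _ _ => sameCycle_some_some_iff σ) ?_
  rintro (_ | a)
  · exact ⟨x, (hx ▸ sameCycle_apply_right.2 (SameCycle.refl σ none)).symm⟩
  · exact ⟨a, SameCycle.refl σ _⟩

theorem numCycles_of_apply_none_eq_none [Finite α] {σ : Perm (Option α)} (h : σ none = none) :
    numCycles σ = numCycles (removeNone σ) + 1 := by
  let g : Option (Quotient (SameCycle.setoid (removeNone σ))) → Quotient (SameCycle.setoid σ) :=
    fun q => q.elim (Quotient.mk _ none)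
      (Quotient.map some fun _ _ => (sameCycle_some_some_iff σ).2)
  have hnone (a : α) : ¬ σ.SameCycle none (some a) := fun hs => nomatch hs.eq_of_left h
  rw [numCycles, numCycles, ← Finite.card_option]
  refine (Nat.card_eq_of_bijective g ⟨?_, ?_⟩).symm
  · rintro (_ | ⟨⟨a⟩⟩) (_ | ⟨⟨b⟩⟩) hab <;> replace hab := Quotient.exact hab
    · rfl
    · exact (hnone b hab).elim
    · exact (hnone a hab.symm).elim
    · exact congrArg some (Quotient.sound ((sameCycle_some_some_iff σ).1 hab))
  · rintro ⟨_ | a⟩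
    · exact ⟨none, rfl⟩
    · exact ⟨some (Quotient.mk _ a), rfl⟩

end Equiv.Perm

open Equiv.Perm

def sepCard {α : Type*} (S : Set α) (k : ℕ) : ℕ :=
  Nat.card {σ : Perm α // numCycles σ = k ∧ S.Pairwise fun i j => ¬ σ.SameCycle i j}

section sepCard

variable {α β : Type*}

theorem sepCard_congr (e : α ≃ β) (S : Set α) (k : ℕ) : sepCard (e '' S) k = sepCard S k := by
  refine (Nat.card_congr (e.permCongr.subtypeEquiv fun τ => ?_)).symm
  rw [numCycles_permCongr, e.injective.injOn.pairwise_image]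
  simp only [Set.Pairwise, Function.onFun, sameCycle_permCongr_apply_iff]

theorem sepCard_option [Fintype α] [DecidableEq α] (S : Set α) (k : ℕ) :
    sepCard (some '' S) (k + 1) = sepCard S k + Fintype.card α * sepCard S (k + 1) := by
  let P (x : Option α) (τ : Perm α) : Prop :=
    numCycles τ = (if x = none then k else k + 1) ∧ S.Pairwise fun i j => ¬ τ.SameCycle i j
  have hP (σ : Perm (Option α)) : (numCycles σ = k + 1 ∧
      (some '' S).Pairwise fun i j => ¬ σ.SameCycle i j) ↔ P (σ none) (removeNone σ) := by
    rw [(Option.some_injective α).injOn.pairwise_image]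
    simp only [Set.Pairwise, Function.onFun, sameCycle_some_some_iff, P]
    by_cases h : σ none = none
    · simp [numCycles_of_apply_none_eq_none h, h]
    · simp [numCycles_of_apply_none_ne_none h, h]
  rw [sepCard, Nat.card_congr (decomposeOption.subtypeEquiv (q := fun p => P p.1 p.2) hP),
    Nat.card_congr (subtypeProdEquivSigmaSubtype P), Nat.card_sigma, Fintype.sum_option]
  simp [P, sepCard]

theorem sepCard_univ [Finite α] (k : ℕ) :
    sepCard (Set.univ : Set α) k = if k = Nat.card α then 1 else 0 := by
  have hsep (σ : Perm α) : (Set.univ.Pairwise fun i j => ¬ σ.SameCycle i j) ↔ σ = 1 := by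
    refine ⟨fun h => Equiv.ext fun a => ?_, fun h => ?_⟩
    · by_contra ha
      exact h (Set.mem_univ _) (Set.mem_univ _) ha (sameCycle_apply_left.2 (SameCycle.refl σ a))
    · subst h
      exact fun i _ j _ hij h => hij (sameCycle_one.1 h)
  simp only [sepCard, hsep]
  split_ifs with hk
  · exact Nat.card_eq_one_iff_exists.2 ⟨⟨1, hk ▸ numCycles_one, rfl⟩,
      fun σ => Subtype.ext σ.2.2⟩
  · exact Nat.card_eq_zero.2 (.inl ⟨fun σ => hk (by rw [← σ.2.1, σ.2.2, numCycles_one])⟩)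

theorem sepCard_eq_zero_of_lt [Finite α] {S : Set α} {k : ℕ} (hk : k < S.ncard) :
    sepCard S k = 0 :=
  Nat.card_eq_zero.2 (.inl ⟨fun σ => (σ.2.1 ▸ hk).not_ge (ncard_le_numCycles_of_pairwise σ.2.2)⟩)

theorem sepCard_zero_right [Finite α] [Nonempty α] (S : Set α) : sepCard S 0 = 0 :=
  Nat.card_eq_zero.2 (.inl ⟨fun σ => (numCycles_pos σ.1).ne' σ.2.1⟩)

end sepCard

theorem cycleCount_eq_numCycles {n : ℕ} (σ : Perm (Fin n)) : cycleCount σ = numCycles σ :=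
  (numCycles_eq_card_cycleType_add σ).symm

theorem sepCount_eq_sepCard (n m k : ℕ) : sepCount n m k = sepCard {i : Fin n | (i : ℕ) < m} k :=
  Nat.card_congr <| .subtypeEquivRight fun σ => by
    rw [cycleCount_eq_numCycles]
    exact and_congr_right' ⟨fun h i hi j hj => h i j hi hj, fun h i j hi hj => h hi hj⟩

theorem stirlingCycle_eq_sepCount (n k : ℕ) : stirlingCycle n k = sepCount n 0 k :=
  Nat.card_congr <| .subtypeEquivRight fun _ =>
    (and_iff_left fun _ _ hi => absurd hi (Nat.not_lt_zero _)).symm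

theorem sepCount_self (m k : ℕ) : sepCount m m k = if k = m then 1 else 0 := by
  have hS : {i : Fin m | (i : ℕ) < m} = Set.univ := Set.eq_univ_of_forall Fin.is_lt
  rw [sepCount_eq_sepCard, hS, sepCard_univ, Nat.card_fin]

theorem sepCount_eq_zero_of_lt {n m k : ℕ} (hmn : m ≤ n) (hk : k < m) : sepCount n m k = 0 := by
  rw [sepCount_eq_sepCard]
  refine sepCard_eq_zero_of_lt ?_
  simpa [Set.ncard_eq_toFinset_card', Fin.card_filter_val_lt, hmn] using hk

theorem image_castSucc_setOf_val_lt {n m : ℕ} (hmn : m ≤ n) :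
    Fin.castSucc '' {i : Fin n | (i : ℕ) < m} = {j : Fin (n + 1) | (j : ℕ) < m} := by
  ext j
  refine ⟨?_, fun (hj : (j : ℕ) < m) => ⟨⟨j, by omega⟩, hj, rfl⟩⟩
  rintro ⟨i, hi, rfl⟩
  exact hi

theorem sepCount_succ_succ {n m : ℕ} (hmn : m ≤ n) (k : ℕ) :
    sepCount (n + 1) m (k + 1) = sepCount n m k + n * sepCount n m (k + 1) := by
  have hS : {j : Fin (n + 1) | (j : ℕ) < m} =
      finSuccEquivLast.symm '' (some '' {i : Fin n | (i : ℕ) < m}) := by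
    rw [Set.image_image, ← image_castSucc_setOf_val_lt hmn]
    simp [finSuccEquivLast_symm_some]
  rw [sepCount_eq_sepCard, hS, sepCard_congr, sepCard_option, Fintype.card_fin,
    ← sepCount_eq_sepCard, ← sepCount_eq_sepCard]

theorem stirlingCycle_eq_stirlingFirst (n k : ℕ) : stirlingCycle n k = Nat.stirlingFirst n k := by
  induction n generalizing k with
  | zero => cases k <;> simp [stirlingCycle_eq_sepCount, sepCount_self]
  | succ n ih =>
    cases k with
    | zero => rw [stirlingCycle_eq_sepCount, sepCount_eq_sepCard, sepCard_zero_right,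
        Nat.stirlingFirst_succ_zero]
    | succ k =>
      rw [stirlingCycle_eq_sepCount, sepCount_succ_succ n.zero_le, ← stirlingCycle_eq_sepCount,
        ← stirlingCycle_eq_sepCount, ih, ih, Nat.stirlingFirst_succ_succ, add_comm]

def sepSum (m N K : ℕ) : ℕ :=
  ∑ d ∈ range (N + 1), N.choose d * m.ascFactorial d * Nat.stirlingFirst (N - d) K

theorem sepSum_zero_right (m N : ℕ) : sepSum m N 0 = m.ascFactorial N := by
  rw [sepSum, sum_eq_single_of_mem N (self_mem_range_succ N)]
  · simp
  · intro d hd hdN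
    obtain ⟨e, he⟩ : ∃ e, N - d = e + 1 := ⟨N - d - 1, by grind⟩
    rw [he, Nat.stirlingFirst_succ_zero, mul_zero]

theorem sepSum_succ_zero (m N : ℕ) : sepSum m (N + 1) 0 = (m + N) * sepSum m N 0 := by
  rw [sepSum_zero_right, sepSum_zero_right, Nat.ascFactorial_succ]

theorem sepSum_succ_succ (m N K : ℕ) :
    sepSum m (N + 1) (K + 1) = sepSum m N K + (m + N) * sepSum m N (K + 1) := by
  have hpascal :=
    sum_choose_succ_mul (fun i j => m.ascFactorial i * Nat.stirlingFirst j (K + 1)) N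
  simp only [Nat.cast_id] at hpascal
  simp only [sepSum, mul_assoc, hpascal, mul_sum, ← sum_add_distrib]
  refine sum_congr rfl fun d hd => ?_
  obtain ⟨j, hj⟩ : ∃ j, N = d + j := ⟨N - d, by grind⟩
  subst hj
  rw [show d + j + 1 - d = j + 1 by omega, show d + j - d = j by omega,
    Nat.stirlingFirst_succ_succ, Nat.ascFactorial_succ]
  ring

theorem sepCount_add_add {m : ℕ} (hm : 1 ≤ m) (N K : ℕ) :
    sepCount (m + N) m (m + K) = sepSum m N K := by
  induction N generalizing K with
  | zero => cases K <;> simp [sepCount_self, sepSum]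
  | succ N ih =>
    rw [← add_assoc]
    cases K with
    | zero =>
      obtain ⟨l, rfl⟩ : ∃ l, m = l + 1 := ⟨m - 1, by omega⟩
      rw [add_zero, sepCount_succ_succ (by omega), sepCount_eq_zero_of_lt (by omega) (by omega),
        zero_add, sepSum_succ_zero, ← ih 0, add_zero]
    | succ K => rw [← add_assoc, sepCount_succ_succ (by omega), ih, add_assoc, ih, sepSum_succ_succ]

/-- For `1 ≤ m ≤ n` and `m ≤ k`:
`C_m(n, k) = Σ_{d=0}^{n-m} binom(n-m, d) binom(d+m-1, d) d! C(n-m-d, k-m)`. -/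
theorem sepCount_eq_sum_stirling (n m k : ℕ) (hm1 : 1 ≤ m) (hmn : m ≤ n) (hmk : m ≤ k) :
    sepCount n m k =
      ∑ d ∈ Finset.range (n - m + 1),
        Nat.choose (n - m) d * Nat.choose (d + m - 1) d * Nat.factorial d *
          stirlingCycle (n - m - d) (k - m) := by
  obtain ⟨N, rfl⟩ := Nat.exists_eq_add_of_le hmn
  obtain ⟨K, rfl⟩ := Nat.exists_eq_add_of_le hmk
  rw [sepCount_add_add hm1, sepSum, Nat.add_sub_cancel_left, Nat.add_sub_cancel_left]
  refine sum_congr rfl fun d _ => ?_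
  rw [stirlingCycle_eq_stirlingFirst, Nat.ascFactorial_eq_factorial_mul_choose', add_comm m d]
  ring
end
end

section
/- Let n ≥ 2 and 1 ≤ m ≤ n with n − m odd. Then Σ_{k ≡ n (mod 2)} C_m(n+1, k) = (n+m)(n+1−m)(n−1)! / (2·m!), where the sum is over all k ≥ 1 with k congruent to n modulo 2. -/
open Equiv Finset

noncomputable section

/-!
Removing the last point from its cycle is a bijection
`Perm (Fin (N + 1)) ≃ Option (Fin N) × Perm (Fin N)` that preserves the separation of
`0, …, m - 1` when `m ≤ N`, and changes the sign exactly when the removed point was not fixed.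
By induction, the permutations of `Fin N` separating `0, …, m - 1` number `N! / m!`, and their
signs sum to `∏_{j=m}^{N-1} (1 - j)`. Since `sign σ = (-1) ^ (N + #cycles)`, the sum counts the
odd separating permutations of `Fin (n + 1)`, i.e. half the difference of these two quantities,
`((n + 1)! - (n - 1)! m (m - 1)) / (2 m!)`.
-/

open scoped Nat

instance {N : ℕ} (m : ℕ) : DecidablePred (Separates (n := N) m) := fun σ => by
  unfold Separates; infer_instance

namespace Equiv.Perm

variable {α β : Type*}

theorem sameCycle_permCongr (e : α ≃ β) {p : Perm α} {x y : β} :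
    (e.permCongr p).SameCycle x y ↔ p.SameCycle (e.symm x) (e.symm y) :=
  exists_congr fun k => by
    rw [← permCongrHom_coe, ← map_zpow, permCongrHom_coe, permCongr_apply, ← e.eq_symm_apply]

section DecomposeOption

variable [DecidableEq α]

theorem sameCycle_decomposeOption_symm_some_apply (i : Option α) (σ : Perm α) (x : α) :
    (decomposeOption.symm (i, σ)).SameCycle (some x) (some (σ x)) := by
  by_cases hi : i = some (σ x)
  · exact ⟨2, by simp [hi, pow_two]⟩
  · exact ⟨1, by simp [swap_apply_of_ne_of_ne, Ne.symm hi]⟩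

theorem sameCycle_decomposeOption_symm_some [Finite α] {i : Option α} {σ : Perm α} {x y : α} :
    (decomposeOption.symm (i, σ)).SameCycle (some x) (some y) ↔ σ.SameCycle x y := by
  set τ := decomposeOption.symm (i, σ)
  constructor
  · intro h
    obtain ⟨k, hk⟩ := h.exists_nat_pow_eq
    -- `none` is attached to the cycle of `x` when `τ` sends it into that cycle
    let P : Option α → Prop := fun o => o.elim (∀ p ∈ i, σ.SameCycle x p) (σ.SameCycle x)
    have hP : ∀ o, P o → P (τ o) := by
      rintro (_ | z) ho
      · cases i <;> simp_all [τ, P]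
      · have hz : σ.SameCycle x (σ z) := sameCycle_apply_right.2 ho
        by_cases hi : i = some (σ z)
        · simp [τ, P, hi, hz]
        · simp [τ, P, swap_apply_of_ne_of_ne, Ne.symm hi, hz]
    have hPpow : ∀ n : ℕ, P ((τ ^ n) (some x)) := fun n => by
      induction n with
      | zero => exact SameCycle.refl _ _
      | succ n ih => rw [pow_succ', mul_apply]; exact hP _ ih
    simpa [hk, P] using hPpow k
  · intro h
    obtain ⟨k, rfl⟩ := h.exists_nat_pow_eq
    clear h
    induction k with
    | zero => exact SameCycle.refl _ _
    | succ k ih =>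
      rw [pow_succ', mul_apply]
      exact ih.trans (sameCycle_decomposeOption_symm_some_apply i σ _)

end DecomposeOption

theorem card_fixed_add_sum_cycleType [Fintype α] [DecidableEq α] (σ : Perm α) :
    #{x | σ x = x} + σ.cycleType.sum = Fintype.card α := by
  rw [sum_cycleType, support, card_filter_add_card_filter_not, card_univ]

/-- Inserting the last point `N` of `Fin (N + 1)` into a permutation of `Fin N`: the first
component is the point whose image becomes `N` (`none` when `N` becomes a fixed point). -/
def decomposeFinLast (N : ℕ) : Perm (Fin (N + 1)) ≃ Option (Fin N) × Perm (Fin N) :=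
  (permCongr finSuccEquivLast).trans decomposeOption

theorem decomposeFinLast_symm_apply {N : ℕ} (i : Option (Fin N)) (σ : Perm (Fin N)) :
    (decomposeFinLast N).symm (i, σ) =
      finSuccEquivLast.symm.permCongr (decomposeOption.symm (i, σ)) :=
  rfl

theorem sameCycle_decomposeFinLast_symm_castSucc {N : ℕ} {i : Option (Fin N)} {σ : Perm (Fin N)}
    {x y : Fin N} :
    ((decomposeFinLast N).symm (i, σ)).SameCycle x.castSucc y.castSucc ↔ σ.SameCycle x y := by
  rw [decomposeFinLast_symm_apply, sameCycle_permCongr]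
  simpa using sameCycle_decomposeOption_symm_some

theorem sign_decomposeFinLast_symm {N : ℕ} (i : Option (Fin N)) (σ : Perm (Fin N)) :
    sign ((decomposeFinLast N).symm (i, σ)) = (if i = none then 1 else -1) * sign σ := by
  rw [decomposeFinLast_symm_apply, sign_permCongr]
  cases i <;> simp [sign_swap']

end Equiv.Perm

open Equiv.Perm

theorem separates_decomposeFinLast_symm {m N : ℕ} (hm : m ≤ N) (i : Option (Fin N))
    (σ : Perm (Fin N)) : Separates m ((decomposeFinLast N).symm (i, σ)) ↔ Separates m σ := by
  constructor
  · intro H x y hx hy hxy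
    rw [← sameCycle_decomposeFinLast_symm_castSucc (i := i)]
    exact H _ _ hx hy (Fin.castSucc_injective _ |>.ne hxy)
  · intro H x y hx hy hxy
    obtain ⟨x, rfl⟩ := Fin.exists_castSucc_eq.2 fun h : x = Fin.last N => by
      simp only [h, Fin.val_last] at hx; omega
    obtain ⟨y, rfl⟩ := Fin.exists_castSucc_eq.2 fun h : y = Fin.last N => by
      simp only [h, Fin.val_last] at hy; omega
    rw [sameCycle_decomposeFinLast_symm_castSucc]
    exact H x y hx hy (ne_of_apply_ne _ hxy)

theorem separates_iff_eq_one {m N : ℕ} (hN : N ≤ m) {σ : Perm (Fin N)} :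
    Separates m σ ↔ σ = 1 := by
  constructor
  · intro H
    ext x
    by_contra hx
    exact H (σ x) x (by omega) (by omega) (fun h => hx (congrArg Fin.val h)) ⟨-1, by simp⟩
  · rintro rfl x y _ _ hxy
    simpa using hxy

def separatingPerms (m N : ℕ) : Finset (Perm (Fin N)) := {σ | Separates m σ}

theorem separatingPerms_self (m : ℕ) : separatingPerms m m = {1} := by
  ext σ
  simp [separatingPerms, separates_iff_eq_one le_rfl]

theorem sum_separatingPerms_succ {M : Type*} [AddCommMonoid M] {m N : ℕ} (hm : m ≤ N)
    (f : Perm (Fin (N + 1)) → M) :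
    ∑ τ ∈ separatingPerms m (N + 1), f τ =
      ∑ i : Option (Fin N), ∑ σ ∈ separatingPerms m N,
        f ((decomposeFinLast N).symm (i, σ)) := by
  simp only [separatingPerms, sum_filter]
  rw [← (decomposeFinLast N).symm.sum_comp, Fintype.sum_prod_type]
  simp only [separates_decomposeFinLast_symm hm]

theorem card_separatingPerms_succ {m N : ℕ} (hm : m ≤ N) :
    #(separatingPerms m (N + 1)) = (N + 1) * #(separatingPerms m N) := by
  rw [card_eq_sum_ones, card_eq_sum_ones, sum_separatingPerms_succ hm]
  simp

theorem sum_sign_separatingPerms_succ {m N : ℕ} (hm : m ≤ N) :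
    ∑ τ ∈ separatingPerms m (N + 1), (sign τ : ℤ) =
      (1 - N) * ∑ σ ∈ separatingPerms m N, (sign σ : ℤ) := by
  simp only [sum_separatingPerms_succ hm, sign_decomposeFinLast_symm, Fintype.sum_option,
    ite_mul, one_mul, neg_mul, ↓reduceIte, reduceCtorEq, Units.val_neg, sum_neg_distrib,
    sum_const, card_univ, Fintype.card_fin, Int.nsmul_eq_mul]
  ring

theorem factorial_mul_card_separatingPerms {m N : ℕ} (hm : m ≤ N) :
    m ! * #(separatingPerms m N) = N ! := by
  induction N, hm using Nat.le_induction with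
  | base => simp [separatingPerms_self]
  | succ N hmN ih => rw [card_separatingPerms_succ hmN, Nat.factorial_succ, ← ih]; ring

theorem sum_sign_separatingPerms {m N : ℕ} (hm : m ≤ N) :
    ∑ σ ∈ separatingPerms m N, (sign σ : ℤ) =
      (-1) ^ (N - m) * ∏ j ∈ Ico m N, ((j : ℤ) - 1) := by
  induction N, hm using Nat.le_induction with
  | base => simp [separatingPerms_self]
  | succ N hmN ih =>
    rw [sum_sign_separatingPerms_succ hmN, ih, Nat.sub_add_comm hmN, pow_succ,
      prod_Ico_succ_top hmN]
    ring

theorem factorial_mul_prod_Ico_sub_one {m N : ℕ} (hm : 1 ≤ m) (hmN : m < N) :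
    (m ! : ℤ) * ∏ j ∈ Ico m N, ((j : ℤ) - 1) = (N - 2)! * m * (m - 1) := by
  induction N, hmN using Nat.le_induction with
  | base =>
    rw [Nat.Ico_succ_singleton, prod_singleton, show m + 1 - 2 = m - 1 by omega,
      ← Nat.mul_factorial_pred (by omega : m ≠ 0)]
    push_cast
    ring
  | succ N hmN ih =>
    obtain ⟨k, rfl⟩ : ∃ k, N = k + 2 := ⟨N - 2, by omega⟩
    rw [prod_Ico_succ_top (by omega), ← mul_assoc, ih,
      show k + 2 + 1 - 2 = (k + 2 - 2) + 1 by omega, Nat.factorial_succ]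
    push_cast
    ring

theorem sign_eq_neg_one_pow_add_cycleCount {N : ℕ} (σ : Perm (Fin N)) :
    sign σ = (-1) ^ (N + cycleCount σ) := by
  have h := card_fixed_add_sum_cycleType σ
  rw [Fintype.card_fin] at h
  rw [sign_of_cycleType, cycleCount]
  refine neg_one_pow_congr ?_
  simp only [Nat.even_iff]
  omega

theorem cycleCount_mem_Icc {N : ℕ} (σ : Perm (Fin (N + 1))) :
    cycleCount σ ∈ Icc 1 (N + 1) := by
  have h := card_fixed_add_sum_cycleType σ
  have hcard : Multiset.card σ.cycleType ≤ σ.cycleType.sum := by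
    simpa using Multiset.card_nsmul_le_sum fun _ hx => (one_lt_of_mem_cycleType hx).le
  have hsum : Multiset.card σ.cycleType = 0 → σ.cycleType.sum = 0 := fun h0 => by
    rw [Multiset.card_eq_zero.1 h0, Multiset.sum_zero]
  rw [Fintype.card_fin] at h
  rw [mem_Icc, cycleCount]
  omega

theorem two_mul_card_filter_sign_eq_neg_one {α : Type*} [Fintype α] [DecidableEq α]
    (s : Finset (Perm α)) :
    2 * (#{σ ∈ s | sign σ = -1} : ℤ) = #s - ∑ σ ∈ s, (sign σ : ℤ) := by
  rw [card_filter, card_eq_sum_ones s]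
  push_cast
  rw [mul_sum, ← sum_sub_distrib]
  refine sum_congr rfl fun σ _ => ?_
  rcases Int.units_eq_one_or (sign σ) with h | h <;> simp [h]

theorem sepCount_eq_card (N m k : ℕ) :
    sepCount N m k = #{σ ∈ separatingPerms m N | cycleCount σ = k} := by
  rw [sepCount, Nat.card_eq_fintype_card, Fintype.card_subtype, separatingPerms, filter_filter]
  simp only [and_comm]

theorem sum_sepCount_parity_eq_card (n m : ℕ) :
    ∑ k ∈ (Icc 1 (n + 1)).filter (fun k => k % 2 = n % 2), sepCount (n + 1) m k =
      #{σ ∈ separatingPerms m (n + 1) | sign σ = -1} := by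
  simp only [sepCount_eq_card, sum_card_fiberwise_eq_card_filter]
  refine congrArg card (filter_congr fun σ _ => ?_)
  rw [mem_filter, sign_eq_neg_one_pow_add_cycleCount,
    neg_one_pow_eq_neg_one_iff_odd (by decide), Nat.odd_iff]
  have := cycleCount_mem_Icc σ
  simp only [mem_Icc] at this ⊢
  omega

theorem two_mul_factorial_mul_card_odd_separatingPerms {n m : ℕ} (hm1 : 1 ≤ m) (hm : m ≤ n)
    (hodd : Odd (n - m)) :
    2 * m ! * (#{σ ∈ separatingPerms m (n + 1) | sign σ = -1} : ℤ) =
      (n - 1)! * (n + m) * (n + 1 - m) := by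
  have heven : Even (n + 1 - m) := by rw [Nat.sub_add_comm hm]; exact hodd.add_one
  have hA : (m ! : ℤ) * #(separatingPerms m (n + 1)) = (n + 1)! := by
    exact_mod_cast factorial_mul_card_separatingPerms (by omega)
  have hB : (m ! : ℤ) * ∑ σ ∈ separatingPerms m (n + 1), (sign σ : ℤ) =
      (n - 1)! * m * (m - 1) := by
    rw [sum_sign_separatingPerms (by omega), heven.neg_one_pow, one_mul,
      factorial_mul_prod_Ico_sub_one hm1 (by omega), show n + 1 - 2 = n - 1 by omega]
  have hfact : ((n + 1)! : ℤ) = (n + 1) * n * (n - 1)! := by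
    rw [Nat.factorial_succ, ← Nat.mul_factorial_pred (by omega : n ≠ 0)]
    push_cast
    ring
  linear_combination (m ! : ℤ) * two_mul_card_filter_sign_eq_neg_one (separatingPerms m (n + 1))
    + hA - hB + hfact

theorem sepCount_parity_sum_odd_general (n m : ℕ) (hm1 : 1 ≤ m) (hm : m ≤ n)
    (hodd : Odd (n - m)) :
    ((∑ k ∈ (Finset.Icc 1 (n + 1)).filter (fun k => k % 2 = n % 2),
        sepCount (n + 1) m k : ℕ) : ℚ) =
      ((n + m : ℕ) : ℚ) * ((n + 1 - m : ℕ) : ℚ) * (Nat.factorial (n - 1) : ℚ) /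
        (2 * (Nat.factorial m : ℚ)) := by
  have h := two_mul_factorial_mul_card_odd_separatingPerms hm1 hm hodd
  rw [sum_sepCount_parity_eq_card, eq_div_iff (by positivity), Nat.cast_sub (by omega)]
  have hq := congrArg (Int.cast : ℤ → ℚ) h
  push_cast at hq ⊢
  linear_combination hq

/-- For `n ≥ 2` and `1 ≤ m ≤ n` with `n - m` odd:
`Σ_{k ≥ 1, k ≡ n (mod 2)} C_m(n+1, k) = (n+m)(n+1-m)(n-1)! / (2 m!)`,
the sum being finite since `C_m(n+1, k) = 0` for `k > n + 1` (so it may be truncated at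
`k = n + 1`). -/
theorem sepCount_parity_sum_odd (n m : ℕ) (hn : 2 ≤ n) (hm1 : 1 ≤ m) (hm : m ≤ n)
    (hodd : Odd (n - m)) :
    ((∑ k ∈ (Finset.Icc 1 (n + 1)).filter (fun k => k % 2 = n % 2),
        sepCount (n + 1) m k : ℕ) : ℚ) =
      ((n + m : ℕ) : ℚ) * ((n + 1 - m : ℕ) : ℚ) * (Nat.factorial (n - 1) : ℚ) /
        (2 * (Nat.factorial m : ℚ)) :=
  sepCount_parity_sum_odd_general n m hm1 hm hodd
end
end
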